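/- arXiv:1609.04626 — 4 statements merged into one kernel-verified Lean document; each statement's English description precedes it below -/
import Mathlib

section
/- Let k ≥ 3 and 1 ≤ i < j < k. Let σ = σ_1σ_2⋯σ_k and τ = τ_1τ_2⋯τ_k be permutations in S_k such that τ_{i+1},…,τ_j is a rearrangement of σ_{i+1},…,σ_j and σ_x = τ_x for every x ∈ [1,i] ∪ [j+1,k]. Suppose that for every integer z with min(i, k−j) < z < k, none of the following order-isomorphisms holds: σ_1⋯σ_z ∼ σ_{k−z+1}⋯σ_k, σ_1⋯σ_z ∼ τ_{k−z+1}⋯τ_k, τ_1⋯τ_z ∼ σ_{k−z+1}⋯σ_k, τ_1⋯τ_z ∼ τ_{k−z+1}⋯τ_k. Then the consecutive patterns σ and τ are filling-shape-Wilf-equivalent, σ ≡_fs τ. -/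
/-- The set of permutation words of length `n`: injective functions
`Fin n → ℕ` whose range is `{1, …, n}` (the word `π_1 π_2 ⋯ π_n`). -/
def PermWords (n : ℕ) : Set (Fin n → ℕ) :=
  {π | Function.Injective π ∧ Set.range π = Set.Icc 1 n}

/-- A word `σ : Fin k → ℕ` is a permutation word, i.e. an element of `S_k`. -/
def IsPermWord {k : ℕ} (σ : Fin k → ℕ) : Prop :=
  Function.Injective σ ∧ Set.range σ = Set.Icc 1 k

/-- `π` contains the vincular pattern `(σ, T)`.  Here `T ⊆ {1, …, k-1}` is the set of
(1-based) adjacency indices: `j ∈ T` forces the `j`-th and `(j+1)`-st letters of an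
occurrence to be at adjacent positions.  (Positions are 0-based `Fin` indices, so the
1-based adjacency index `j+1 ∈ T` relates 0-based positions `j` and `j+1`.) -/
def Contains {n k : ℕ} (π : Fin n → ℕ) (σ : Fin k → ℕ) (T : Set ℕ) : Prop :=
  ∃ idx : Fin k → Fin n, StrictMono idx ∧
    (∀ s t : Fin k, π (idx s) < π (idx t) ↔ σ s < σ t) ∧
    (∀ j : ℕ, j + 1 ∈ T → ∀ h : j + 1 < k,
      ((idx ⟨j + 1, h⟩ : ℕ) = (idx ⟨j, Nat.lt_of_succ_lt h⟩ : ℕ) + 1))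

/-- The first `z` letters of `a` are order-isomorphic to the last `z` letters of `b`
(i.e. `a_1 ⋯ a_z ∼ b_{k-z+1} ⋯ b_k`). -/
def OrderIsoAt {k : ℕ} (a b : Fin k → ℕ) (z : ℕ) : Prop :=
  ∀ s t : Fin k, (s : ℕ) < z → (t : ℕ) < z →
    ∀ hs : k - z + (s : ℕ) < k, ∀ ht : k - z + (t : ℕ) < k,
      (a s < a t ↔ b ⟨k - z + (s : ℕ), hs⟩ < b ⟨k - z + (t : ℕ), ht⟩)

/-- A Young diagram: a finite, downward-closed set of cells with positive coordinates
(first coordinate = column, second coordinate = row). -/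
structure YoungShape where
  cells : Set (ℕ × ℕ)
  finite : cells.Finite
  pos : ∀ c ∈ cells, 1 ≤ c.1 ∧ 1 ≤ c.2
  lower : ∀ c ∈ cells, ∀ a b : ℕ, 1 ≤ a → a ≤ c.1 → 1 ≤ b → b ≤ c.2 → (a, b) ∈ cells

/-- A filling of a Young diagram: a set of selected cells with pairwise distinct
first coordinates and pairwise distinct second coordinates. -/
def IsFilling (D : YoungShape) (F : Set (ℕ × ℕ)) : Prop :=
  F ⊆ D.cells ∧
  (∀ c ∈ F, ∀ c' ∈ F, c.1 = c'.1 → c = c') ∧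
  (∀ c ∈ F, ∀ c' ∈ F, c.2 = c'.2 → c = c')

/-- A filling `F` of the Young diagram `D` contains the vincular pattern `(σ, T)`. -/
def FillingContains (D : YoungShape) (F : Set (ℕ × ℕ)) {k : ℕ}
    (σ : Fin k → ℕ) (T : Set ℕ) : Prop :=
  ∃ idx v : Fin k → ℕ, StrictMono idx ∧
    (∀ s : Fin k, (idx s, v s) ∈ F) ∧
    (∀ s t : Fin k, v s < v t ↔ σ s < σ t) ∧
    (∀ s t : Fin k, (idx s, v t) ∈ D.cells) ∧
    (∀ j : ℕ, j + 1 ∈ T → ∀ h : j + 1 < k,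
      idx ⟨j + 1, h⟩ = idx ⟨j, Nat.lt_of_succ_lt h⟩ + 1)

/-- The rows of `D` containing no selected cell of `F`. -/
def emptyRows (D : YoungShape) (F : Set (ℕ × ℕ)) : Set ℕ :=
  {r | (∃ c ∈ D.cells, c.2 = r) ∧ ∀ c ∈ F, c.2 ≠ r}

/-- The columns of `D` containing no selected cell of `F`. -/
def emptyCols (D : YoungShape) (F : Set (ℕ × ℕ)) : Set ℕ :=
  {r | (∃ c ∈ D.cells, c.1 = r) ∧ ∀ c ∈ F, c.1 ≠ r}

/-- Filling-shape-Wilf-equivalence of the vincular patterns `(σ, Tσ)` and `(τ, Tτ)`. -/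
def FSWilfEquiv {k : ℕ} (σ : Fin k → ℕ) (Tσ : Set ℕ) (τ : Fin k → ℕ) (Tτ : Set ℕ) : Prop :=
  ∀ (D : YoungShape) (R C : Set ℕ),
    {F : Set (ℕ × ℕ) | IsFilling D F ∧ ¬ FillingContains D F σ Tσ ∧
      emptyRows D F = R ∧ emptyCols D F = C}.ncard =
    {F : Set (ℕ × ℕ) | IsFilling D F ∧ ¬ FillingContains D F τ Tτ ∧
      emptyRows D F = R ∧ emptyCols D F = C}.ncard

/-- The consecutive pattern `σ'` (of length `k`) occurs in `π` at the 1-based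
positions `x+1, …, x+k`. -/
def OccursAt {n k : ℕ} (π : Fin n → ℕ) (σ' : Fin k → ℕ) (x : ℕ) : Prop :=
  ∃ h : x + k ≤ n, ∀ s t : Fin k,
    (π ⟨x + (s : ℕ), by have := s.isLt; omega⟩ < π ⟨x + (t : ℕ), by have := t.isLt; omega⟩
      ↔ σ' s < σ' t)

/-- `T_n(σ)[v]` for a quasi-consecutive pattern `σ = σ_1 ⋯ σ_k - σ_{k+1}`
(adjacency set `{1, …, k-1}`): the number of `σ`-avoiding permutations of length `n`
beginning with the word `v`. -/
noncomputable def Tnv (n : ℕ) {k : ℕ} (σ : Fin (k + 1) → ℕ) {r : ℕ} (v : Fin r → ℕ) : ℕ :=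
  {π : Fin n → ℕ | π ∈ PermWords n ∧ ¬ Contains π σ (Set.Icc 1 (k - 1)) ∧
    ∀ p : Fin r, ∀ h : (p : ℕ) < n, π ⟨(p : ℕ), h⟩ = v p}.ncard

/-- `T_n(σ)[x, i, w]` for a quasi-consecutive pattern `σ = σ_1 ⋯ σ_k - σ_{k+1}`:
the number of `σ`-avoiding permutations of length `n` whose earliest occurrence of
the consecutive pattern `σ_1 ⋯ σ_k` is at 1-based positions `x+1, …, x+k` and such
that `w = π_1 ⋯ π_{x+i-1} π_{x+i+1} ⋯ π_{x+k}`. -/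
noncomputable def TnXIW (n : ℕ) {k : ℕ} (σ : Fin (k + 1) → ℕ) (x i : ℕ) (w : Fin (x + k - 1) → ℕ) : ℕ :=
  {π : Fin n → ℕ | π ∈ PermWords n ∧ ¬ Contains π σ (Set.Icc 1 (k - 1)) ∧
    OccursAt π (fun t : Fin k => σ t.castSucc) x ∧
    (∀ x' < x, ¬ OccursAt π (fun t : Fin k => σ t.castSucc) x') ∧
    (∀ p : Fin (x + k - 1), ∀ h1 : (p : ℕ) < n, ∀ h2 : (p : ℕ) + 1 < n,
      w p = if (p : ℕ) + 1 ≤ x + i - 1 then π ⟨(p : ℕ), h1⟩ else π ⟨(p : ℕ) + 1, h2⟩)}.ncard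

/-- `T_n(σ) = |S_n(σ)|` for a length-5 quasi-consecutive pattern word `σ`
(adjacency set `T = {1,2,3}`). -/
noncomputable def T0 (n : ℕ) (σ : Fin 5 → ℕ) : ℕ :=
  {π : Fin n → ℕ | π ∈ PermWords n ∧ ¬ Contains π σ ({1, 2, 3} : Set ℕ)}.ncard

/-- `T_n(σ)[k]`: the number of `σ`-avoiding permutations of length `n` with `π_1 = a`. -/
noncomputable def T1 (n : ℕ) (σ : Fin 5 → ℕ) (a : ℕ) : ℕ :=
  {π : Fin n → ℕ | π ∈ PermWords n ∧ ¬ Contains π σ ({1, 2, 3} : Set ℕ) ∧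
    ∀ h : 0 < n, π ⟨0, h⟩ = a}.ncard

/-- `T_n(σ)[k, ℓ]`: the number of `σ`-avoiding permutations of length `n` with
`π_1 = a` and `π_2 = b`. -/
noncomputable def T2 (n : ℕ) (σ : Fin 5 → ℕ) (a b : ℕ) : ℕ :=
  {π : Fin n → ℕ | π ∈ PermWords n ∧ ¬ Contains π σ ({1, 2, 3} : Set ℕ) ∧
    (∀ h : 0 < n, π ⟨0, h⟩ = a) ∧ (∀ h : 1 < n, π ⟨1, h⟩ = b)}.ncard

section Aux
variable {k : ℕ}

/-- A consecutive occurrence of pattern `ρ` at starting column `x` in filling `F`. -/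
def OccAt (D : YoungShape) (F : Set (ℕ × ℕ)) (ρ : Fin k → ℕ) (x : ℕ) : Prop :=
  ∃ v : Fin k → ℕ, (∀ s : Fin k, (x + (s : ℕ), v s) ∈ F) ∧
    (∀ s t : Fin k, v s < v t ↔ ρ s < ρ t) ∧
    (∀ s t : Fin k, (x + (s : ℕ), v t) ∈ D.cells)

lemma fc_iff (D : YoungShape) (F : Set (ℕ × ℕ)) (ρ : Fin k → ℕ) (hk : 1 ≤ k) :
    FillingContains D F ρ (Set.Icc 1 (k - 1)) ↔ ∃ x, OccAt D F ρ x := by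
  constructor
  · rintro ⟨idx, v, hmono, hmem, hiso, hrect, hadj⟩
    have key : ∀ s : Fin k, idx s = idx ⟨0, by omega⟩ + (s : ℕ) := by
      intro s
      obtain ⟨sv, hsv⟩ := s
      induction sv with
      | zero => simp
      | succ n ih =>
        have hn : n + 1 < k := hsv
        have := hadj n (by constructor <;> omega) hn
        rw [this, ih (by omega)]; simp; omega
    refine ⟨idx ⟨0, by omega⟩, v, fun s => ?_, hiso, fun s t => ?_⟩
    · rw [← key s]; exact hmem s
    · rw [← key s]; exact hrect s t
  · rintro ⟨x, v, hmem, hiso, hrect⟩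
    refine ⟨fun s => x + (s : ℕ), v, fun a b hab => by simpa using hab,
      hmem, hiso, hrect, fun j hj h => by simp [Nat.add_assoc]⟩

/-- Column-uniqueness of rows in a filling. -/
lemma filling_col_unique {D : YoungShape} {F : Set (ℕ × ℕ)} (hF : IsFilling D F)
    {a b b' : ℕ} (h : (a, b) ∈ F) (h' : (a, b') ∈ F) : b = b' := by
  have := hF.2.1 _ h _ h' rfl
  exact congrArg Prod.snd this

lemma filling_row_unique {D : YoungShape} {F : Set (ℕ × ℕ)} (hF : IsFilling D F)
    {a a' b : ℕ} (h : (a, b) ∈ F) (h' : (a', b) ∈ F) : a = a' := by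
  have := hF.2.2 _ h _ h' rfl
  exact congrArg Prod.fst this

/-- Two permutation words that are fully order-isomorphic are equal. -/
lemma isoEq {α β : Fin k → ℕ} (hα : IsPermWord α) (hβ : IsPermWord β)
    (h : ∀ s t : Fin k, α s < α t ↔ β s < β t) : α = β := by
  funext s
  have hc : ∀ (γ : Fin k → ℕ), IsPermWord γ →
      γ s = (Finset.univ.filter (fun t => γ t ≤ γ s)).card := by
    intro γ hγ
    have himg : Finset.image γ (Finset.univ.filter (fun t => γ t ≤ γ s)) =
        Finset.Icc 1 (γ s) := by
      apply Finset.ext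
      intro y
      simp only [Finset.mem_image, Finset.mem_filter, Finset.mem_univ, true_and,
        Finset.mem_Icc]
      constructor
      · rintro ⟨t, ht, rfl⟩
        refine ⟨?_, ht⟩
        have : γ t ∈ Set.range γ := ⟨t, rfl⟩
        rw [hγ.2] at this
        exact this.1
      · rintro ⟨h1, h2⟩
        have : y ∈ Set.range γ := by
          rw [hγ.2]
          have hs : γ s ∈ Set.range γ := ⟨s, rfl⟩
          rw [hγ.2] at hs
          exact ⟨h1, le_trans h2 hs.2⟩
        obtain ⟨t, rfl⟩ := this
        exact ⟨t, h2, rfl⟩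
    have hcard := congrArg Finset.card himg
    rw [Finset.card_image_of_injective _ hγ.1] at hcard
    rw [hcard, Nat.card_Icc]
    have : 1 ≤ γ s := by
      have : γ s ∈ Set.range γ := ⟨s, rfl⟩
      rw [hγ.2] at this; exact this.1
    omega
  rw [hc α hα, hc β hβ]
  congr 1
  apply Finset.filter_congr
  intro t _
  rw [← not_lt, ← not_lt, h s t]

end Aux
section Aux2
variable {k i j : ℕ} {D : YoungShape} {F : Set (ℕ × ℕ)}

lemma overlap {ρ₁ ρ₂ : Fin k → ℕ} {x x' : ℕ} (hF : IsFilling D F)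
    (h1 : OccAt D F ρ₁ x) (h2 : OccAt D F ρ₂ x') (hlt : x < x') (hlt2 : x' < x + k) :
    OrderIsoAt ρ₂ ρ₁ (x + k - x') := by
  obtain ⟨v₁, hmem₁, hiso₁, -⟩ := h1
  obtain ⟨v₂, hmem₂, hiso₂, -⟩ := h2
  set z := x + k - x' with hz
  intro s t hs ht hs' ht'
  have e : ∀ (u : Fin k), (u : ℕ) < z → ∀ hh : k - z + (u : ℕ) < k,
      v₂ u = v₁ ⟨k - z + (u : ℕ), hh⟩ := by
    intro u hu hh
    have hcol : x + ((⟨k - z + (u : ℕ), hh⟩ : Fin k) : ℕ) = x' + (u : ℕ) := by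
      simp only [Fin.val_mk]; omega
    have h1' := hmem₁ ⟨k - z + (u : ℕ), hh⟩
    rw [hcol] at h1'
    exact filling_col_unique hF (hmem₂ u) h1'
  rw [← hiso₂ s t, e s hs hs', e t ht ht', hiso₁]

lemma far {ρ₁ ρ₂ : Fin k → ℕ} {x x' : ℕ} (hF : IsFilling D F)
    (hjk : j < k)
    (h1 : OccAt D F ρ₁ x) (h2 : OccAt D F ρ₂ x') (hxx : x < x')
    (hno : ∀ z, min i (k - j) < z → z < k → ¬ OrderIsoAt ρ₂ ρ₁ z) :
    x + k ≤ x' + min i (k - j) := by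
  by_contra hc
  push_neg at hc
  have hlt2 : x' < x + k := by omega
  have := overlap hF h1 h2 hxx hlt2
  exact hno (x + k - x') (by omega) (by omega) this

/-- Column `a` is in the middle region of the block starting at `x`. -/
def MidC (i j x a : ℕ) : Prop := x + i ≤ a ∧ a < x + j

/-- The block at `x'` cannot touch the middle of a different block at `x`. -/
lemma blocksep {ρ₁ ρ₂ : Fin k → ℕ} {x x' a : ℕ} (hF : IsFilling D F)
    (hi : 1 ≤ i) (hij : i < j) (hjk : j < k)
    (h1 : OccAt D F ρ₁ x) (h2 : OccAt D F ρ₂ x') (hne : x ≠ x')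
    (hno12 : ∀ z, min i (k - j) < z → z < k → ¬ OrderIsoAt ρ₂ ρ₁ z)
    (hno21 : ∀ z, min i (k - j) < z → z < k → ¬ OrderIsoAt ρ₁ ρ₂ z)
    (hmid : MidC i j x a) : ¬ (x' ≤ a ∧ a < x' + k) := by
  rintro ⟨hb1, hb2⟩
  have hmin1 : min i (k - j) ≤ i := min_le_left _ _
  have hmin2 : min i (k - j) ≤ k - j := min_le_right _ _
  obtain ⟨hm1, hm2⟩ := hmid
  rcases lt_or_gt_of_ne hne with h | h
  · have := far hF hjk h1 h2 h hno12
    omega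
  · have := far hF hjk h2 h1 h hno21
    omega

/-- The middles of two distinct blocks with occurrences are disjoint. -/
lemma midsep {ρ₁ ρ₂ : Fin k → ℕ} {x x' a : ℕ} (hF : IsFilling D F)
    (hi : 1 ≤ i) (hij : i < j) (hjk : j < k)
    (h1 : OccAt D F ρ₁ x) (h2 : OccAt D F ρ₂ x')
    (hno12 : ∀ z, min i (k - j) < z → z < k → ¬ OrderIsoAt ρ₂ ρ₁ z)
    (hno21 : ∀ z, min i (k - j) < z → z < k → ¬ OrderIsoAt ρ₁ ρ₂ z)
    (hmid : MidC i j x a) (hmid' : MidC i j x' a) : x = x' := by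
  by_contra hne
  exact blocksep hF hi hij hjk h1 h2 hne hno12 hno21 hmid
    ⟨by have := hmid'.1; omega, by have := hmid'.2; omega⟩

/-- The rearranged-filling map: replace the middle of every `β`-occurrence,
moving the value of column `x + m s` to column `x + s`. -/
def Phi (D : YoungShape) (i j : ℕ) (β : Fin k → ℕ) (m : Fin k → Fin k)
    (F : Set (ℕ × ℕ)) : Set (ℕ × ℕ) :=
  {c | (c ∈ F ∧ ∀ x, OccAt D F β x → ¬ MidC i j x c.1) ∨
    (∃ x, OccAt D F β x ∧ MidC i j x c.1 ∧
      ∃ s : Fin k, x + (s : ℕ) = c.1 ∧ (x + ((m s) : ℕ), c.2) ∈ F)}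

end Aux2
section Aux3
variable {k i j : ℕ} {D : YoungShape} {F : Set (ℕ × ℕ)}
variable {α β : Fin k → ℕ} {m : Fin k → Fin k}

/-- The package of hypotheses for the swapping construction, for the
ordered pair of patterns `(α, β)` with translation map `m` (`β ∘ m = α`). -/
structure Setup (k i j : ℕ) (α β : Fin k → ℕ) (m : Fin k → Fin k) : Prop where
  hk : 3 ≤ k
  hi : 1 ≤ i
  hij : i < j
  hjk : j < k
  hα : IsPermWord α
  hβ : IsPermWord β
  hne : α ≠ β
  hm1 : ∀ s, β (m s) = α s
  hm2 : ∀ s : Fin k, ((s : ℕ) < i ∨ j ≤ (s : ℕ)) → m s = s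
  hm3 : ∀ s : Fin k, i ≤ (s : ℕ) → (s : ℕ) < j → i ≤ ((m s) : ℕ) ∧ ((m s) : ℕ) < j
  hm4 : Function.Surjective m
  hno : ∀ ρ₁ : Fin k → ℕ, (ρ₁ = α ∨ ρ₁ = β) → ∀ ρ₂ : Fin k → ℕ, (ρ₂ = α ∨ ρ₂ = β) →
        ∀ z, min i (k - j) < z → z < k → ¬ OrderIsoAt ρ₁ ρ₂ z

lemma Setup.minj (S : Setup k i j α β m) : Function.Injective m := by
  intro s t hst
  apply S.hα.1
  rw [← S.hm1 s, ← S.hm1 t, hst]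

lemma phi_mem_nomid {a b : ℕ}
    (hnomid : ∀ x, OccAt D F β x → ¬ MidC i j x a) :
    ((a, b) ∈ Phi D i j β m F ↔ (a, b) ∈ F) := by
  constructor
  · rintro (⟨h, -⟩ | ⟨x, hx, hmid, -⟩)
    · exact h
    · exact absurd hmid (hnomid x hx)
  · intro h
    exact Or.inl ⟨h, hnomid⟩

lemma phi_mem_mid (S : Setup k i j α β m) (hF : IsFilling D F)
    {x a b : ℕ} (hx : OccAt D F β x) (hmid : MidC i j x a)
    (s : Fin k) (hs : x + (s : ℕ) = a) :
    ((a, b) ∈ Phi D i j β m F ↔ (x + ((m s) : ℕ), b) ∈ F) := by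
  have hnoBB := S.hno β (Or.inr rfl) β (Or.inr rfl)
  constructor
  · rintro (⟨-, hall⟩ | ⟨x₁, hx₁, hmid₁, s₁, hcol₁, hmem₁⟩)
    · exact absurd hmid (hall x hx)
    · have hxx : x₁ = x := midsep hF S.hi S.hij S.hjk hx₁ hx hnoBB hnoBB hmid₁ hmid
      subst hxx
      have hss : s₁ = s := by
        apply Fin.ext
        omega
      subst hss
      exact hmem₁
  · intro h
    exact Or.inr ⟨x, hx, hmid, s, hs, h⟩

/-- `Phi` creates an `α`-occurrence at the place of each `β`-occurrence. -/
lemma phi_occ (S : Setup k i j α β m) (hF : IsFilling D F)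
    {x : ℕ} (hx : OccAt D F β x) : OccAt D (Phi D i j β m F) α x := by
  have hnoBB := S.hno β (Or.inr rfl) β (Or.inr rfl)
  obtain ⟨v, hvm, hviso, hvrect⟩ := hx
  have hxocc : OccAt D F β x := ⟨v, hvm, hviso, hvrect⟩
  refine ⟨fun s => v (m s), fun s => ?_, fun s t => ?_, fun s t => hvrect s (m t)⟩
  · by_cases hsmid : i ≤ (s : ℕ) ∧ (s : ℕ) < j
    · have hmid : MidC i j x (x + (s : ℕ)) := ⟨by omega, by omega⟩
      exact (phi_mem_mid S hF hxocc hmid s rfl).mpr (hvm (m s))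
    · have hms : m s = s := S.hm2 s (by omega)
      show (x + (s : ℕ), v (m s)) ∈ Phi D i j β m F
      rw [hms]
      apply Or.inl
      refine ⟨hvm s, fun x' hx' hmid' => ?_⟩
      by_cases hxx : x' = x
      · subst hxx
        obtain ⟨h1, h2⟩ := hmid'
        omega
      · exact blocksep hF S.hi S.hij S.hjk hx' hxocc hxx hnoBB hnoBB hmid'
          ⟨by omega, by have := s.isLt; omega⟩
  · rw [hviso, S.hm1, S.hm1]

/-- `Phi` produces a filling. -/
lemma phi_filling (S : Setup k i j α β m) (hF : IsFilling D F) :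
    IsFilling D (Phi D i j β m F) := by
  have hnoBB := S.hno β (Or.inr rfl) β (Or.inr rfl)
  refine ⟨?_, ?_, ?_⟩
  · rintro ⟨a, b⟩ (⟨h, -⟩ | ⟨x, hx, hmid, s, hcol, hmem⟩)
    · exact hF.1 h
    · obtain ⟨v, hvm, hviso, hvrect⟩ := hx
      have hb : b = v (m s) := filling_col_unique hF hmem (hvm (m s))
      subst hb
      have := hvrect s (m s)
      simpa [hcol] using this
  · rintro ⟨a, b⟩ hc ⟨a', b'⟩ hc' hcol
    simp only at hcol
    subst hcol
    by_cases hm : ∃ x, OccAt D F β x ∧ MidC i j x a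
    · obtain ⟨x, hx, hmid⟩ := hm
      have hsk : a - x < k := by
        have hjk := S.hjk
        obtain ⟨h1, h2⟩ := hmid
        omega
      have hs : x + ((⟨a - x, hsk⟩ : Fin k) : ℕ) = a := by
        simp only [Fin.val_mk]
        obtain ⟨h1, h2⟩ := hmid
        omega
      have h1 := (phi_mem_mid S hF hx hmid _ hs).mp hc
      have h2 := (phi_mem_mid S hF hx hmid _ hs).mp hc'
      have : b = b' := filling_col_unique hF h1 h2
      simp [this]
    · push_neg at hm
      have h1 := (phi_mem_nomid (m := m) fun x hx => hm x hx).mp hc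
      have h2 := (phi_mem_nomid (m := m) fun x hx => hm x hx).mp hc'
      have : b = b' := filling_col_unique hF h1 h2
      simp [this]
  · rintro ⟨a, b⟩ hc ⟨a', b'⟩ hc' hrow
    simp only at hrow
    subst hrow
    -- translate each cell to an F-cell with the same row
    have key : ∀ a₀ : ℕ, (a₀, b) ∈ Phi D i j β m F →
        ((a₀, b) ∈ F ∧ ∀ x, OccAt D F β x → ¬ MidC i j x a₀) ∨
        (∃ x : ℕ, ∃ s : Fin k, OccAt D F β x ∧ MidC i j x a₀ ∧ x + (s : ℕ) = a₀ ∧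
          (x + ((m s) : ℕ), b) ∈ F ∧ MidC i j x (x + ((m s) : ℕ))) := by
      rintro a₀ (⟨h, hall⟩ | ⟨x, hx, hmid, s, hcol, hmem⟩)
      · exact Or.inl ⟨h, hall⟩
      · refine Or.inr ⟨x, s, hx, hmid, hcol, hmem, ?_⟩
        have hsmid : i ≤ (s : ℕ) ∧ (s : ℕ) < j := by
          obtain ⟨h1, h2⟩ := hmid
          omega
        have := S.hm3 s hsmid.1 hsmid.2
        exact ⟨by omega, by omega⟩
    rcases key a hc with ⟨h1, hall1⟩ | ⟨x, s, hx, hmid, hcol, hmem, hmmid⟩ <;>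
      rcases key a' hc' with ⟨h1', hall1'⟩ | ⟨x', s', hx', hmid', hcol', hmem', hmmid'⟩
    · have : a = a' := filling_row_unique hF h1 h1'
      simp [this]
    · have : a = x' + ((m s') : ℕ) := filling_row_unique hF h1 hmem'
      rw [this] at hall1
      exact absurd hmmid' (hall1 x' hx')
    · have : x + ((m s) : ℕ) = a' := filling_row_unique hF hmem h1'
      rw [← this] at hall1'
      exact absurd hmmid (hall1' x hx)
    · have hcc : x + ((m s) : ℕ) = x' + ((m s') : ℕ) := filling_row_unique hF hmem hmem'
      have hxx : x = x' := by
        apply midsep hF S.hi S.hij S.hjk hx hx' hnoBB hnoBB hmmid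
        rw [hcc]
        exact hmmid'
      subst hxx
      have hms : m s = m s' := by
        apply Fin.ext
        omega
      have hss : s = s' := S.minj hms
      subst hss
      have : a = a' := by omega
      simp [this]

end Aux3
section Aux4
variable {k i j : ℕ} {D : YoungShape} {F : Set (ℕ × ℕ)}
variable {α β : Fin k → ℕ} {m : Fin k → Fin k}

/-- Any occurrence (of `α` or `β`) in `Phi F` sits exactly at a `β`-occurrence
of `F`, and that occurrence is an `α`-occurrence. -/
lemma phi_no_new (S : Setup k i j α β m) (hF : IsFilling D F)
    (hav : ∀ x, ¬ OccAt D F α x) {ρ : Fin k → ℕ} (hρ : ρ = α ∨ ρ = β)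
    {x' : ℕ} (hocc : OccAt D (Phi D i j β m F) ρ x') :
    OccAt D F β x' ∧ ρ = α := by
  have hG : IsFilling D (Phi D i j β m F) := phi_filling S hF
  have hnoρα : ∀ z, min i (k - j) < z → z < k → ¬ OrderIsoAt ρ α z :=
    S.hno ρ hρ α (Or.inl rfl)
  have hnoαρ : ∀ z, min i (k - j) < z → z < k → ¬ OrderIsoAt α ρ z :=
    S.hno α (Or.inl rfl) ρ hρ
  by_cases hc : ∃ x a, OccAt D F β x ∧ MidC i j x a ∧ x' ≤ a ∧ a < x' + k
  · obtain ⟨x, a, hx, hmid, hb1, hb2⟩ := hc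
    by_cases hxx : x = x'
    · subst hxx
      refine ⟨hx, ?_⟩
      -- values of the occurrence in `Phi F` at `x` agree with `v ∘ m`
      have hαocc : OccAt D (Phi D i j β m F) α x := phi_occ S hF hx
      obtain ⟨w, hwm, hwiso, -⟩ := hocc
      obtain ⟨v', hvm', hviso', -⟩ := hαocc
      have hwv : ∀ s : Fin k, w s = v' s := fun s =>
        filling_col_unique hG (hwm s) (hvm' s)
      have hρperm : IsPermWord ρ := by
        rcases hρ with h | h
        · rw [h]; exact S.hα
        · rw [h]; exact S.hβ
      apply isoEq hρperm S.hα
      intro s t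
      rw [← hwiso s t, hwv s, hwv t, hviso']
    · exfalso
      have hαocc : OccAt D (Phi D i j β m F) α x := phi_occ S hF hx
      have hmidG : MidC i j x a := hmid
      exact blocksep hG S.hi S.hij S.hjk hαocc hocc hxx hnoρα hnoαρ hmidG ⟨hb1, hb2⟩
  · exfalso
    -- every cell of the occurrence is outside all middles, hence it is in `F`
    obtain ⟨w, hwm, hwiso, hwrect⟩ := hocc
    have hwF : ∀ s : Fin k, (x' + (s : ℕ), w s) ∈ F := by
      intro s
      apply (phi_mem_nomid (m := m) ?_).mp (hwm s)
      intro x hx hmid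
      exact hc ⟨x, x' + (s : ℕ), hx, hmid, Nat.le_add_right _ _,
        by have := s.isLt; omega⟩
    have hFocc : OccAt D F ρ x' := ⟨w, hwF, hwiso, hwrect⟩
    rcases hρ with h | h
    · subst h; exact hav x' hFocc
    · subst h
      have hij := S.hij
      have hjk := S.hjk
      exact hc ⟨x', x' + i, hFocc, ⟨le_refl _, by omega⟩,
        Nat.le_add_right _ _, by omega⟩

lemma phi_occ_iff (S : Setup k i j α β m) (hF : IsFilling D F)
    (hav : ∀ x, ¬ OccAt D F α x) (x : ℕ) :
    OccAt D (Phi D i j β m F) α x ↔ OccAt D F β x :=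
  ⟨fun h => (phi_no_new S hF hav (Or.inl rfl) h).1, phi_occ S hF⟩

lemma phi_avoids (S : Setup k i j α β m) (hF : IsFilling D F)
    (hav : ∀ x, ¬ OccAt D F α x) (x : ℕ) :
    ¬ OccAt D (Phi D i j β m F) β x := fun h =>
  S.hne ((phi_no_new S hF hav (Or.inr rfl) h).2).symm

lemma phi_rows_aux (S : Setup k i j α β m) (hF : IsFilling D F) (b : ℕ) :
    (∃ a, (a, b) ∈ Phi D i j β m F) ↔ ∃ a, (a, b) ∈ F := by
  constructor
  · rintro ⟨a, (⟨h, -⟩ | ⟨x, hx, hmid, s, hcol, hmem⟩)⟩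
    · exact ⟨a, h⟩
    · exact ⟨x + ((m s) : ℕ), hmem⟩
  · rintro ⟨a, haF⟩
    by_cases hm : ∃ x, OccAt D F β x ∧ MidC i j x a
    · obtain ⟨x, hx, hmid⟩ := hm
      have hjk := S.hjk
      obtain ⟨hmid1, hmid2⟩ := hmid
      have hsk : a - x < k := by omega
      set s : Fin k := ⟨a - x, hsk⟩ with hsdef
      have hs : x + (s : ℕ) = a := by simp [hsdef]; omega
      have hsmid : i ≤ (s : ℕ) ∧ (s : ℕ) < j := by simp [hsdef]; omega
      obtain ⟨s', hs'⟩ := S.hm4 s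
      have hs'mid : i ≤ (s' : ℕ) ∧ (s' : ℕ) < j := by
        by_contra hcon
        have : m s' = s' := S.hm2 s' (by omega)
        rw [this] at hs'
        rw [hs'] at hcon
        exact hcon hsmid
      refine ⟨x + (s' : ℕ), ?_⟩
      apply (phi_mem_mid S hF hx ⟨by omega, by omega⟩ s' rfl).mpr
      rw [hs', hs]
      exact haF
    · push_neg at hm
      exact ⟨a, (phi_mem_nomid (m := m) hm).mpr haF⟩

lemma phi_cols_aux (S : Setup k i j α β m) (hF : IsFilling D F) (a : ℕ) :
    (∃ b, (a, b) ∈ Phi D i j β m F) ↔ ∃ b, (a, b) ∈ F := by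
  constructor
  · rintro ⟨b, (⟨h, -⟩ | ⟨x, hx, hmid, s, hcol, hmem⟩)⟩
    · exact ⟨b, h⟩
    · obtain ⟨v, hvm, -, -⟩ := hx
      have hcol' : x + (s : ℕ) = a := hcol
      refine ⟨v s, ?_⟩
      rw [← hcol']
      exact hvm s
  · rintro ⟨b, haF⟩
    by_cases hm : ∃ x, OccAt D F β x ∧ MidC i j x a
    · obtain ⟨x, hx, hmid⟩ := hm
      have hjk := S.hjk
      obtain ⟨hmid1, hmid2⟩ := hmid
      have hsk : a - x < k := by omega
      set s : Fin k := ⟨a - x, hsk⟩ with hsdef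
      have hs : x + (s : ℕ) = a := by simp [hsdef]; omega
      obtain ⟨v, hvm, hviso, hvrect⟩ := hx
      refine ⟨v (m s), ?_⟩
      apply (phi_mem_mid S hF ⟨v, hvm, hviso, hvrect⟩ ⟨hmid1, hmid2⟩ s hs).mpr
      exact hvm (m s)
    · push_neg at hm
      exact ⟨b, (phi_mem_nomid (m := m) hm).mpr haF⟩

lemma phi_emptyRows (S : Setup k i j α β m) (hF : IsFilling D F) :
    emptyRows D (Phi D i j β m F) = emptyRows D F := by
  ext r
  simp only [emptyRows, Set.mem_setOf_eq]
  constructor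
  · rintro ⟨h1, h2⟩
    refine ⟨h1, ?_⟩
    rintro ⟨a, b⟩ hc rfl
    obtain ⟨a', ha'⟩ := (phi_rows_aux S hF b).mpr ⟨a, hc⟩
    exact h2 _ ha' rfl
  · rintro ⟨h1, h2⟩
    refine ⟨h1, ?_⟩
    rintro ⟨a, b⟩ hc rfl
    obtain ⟨a', ha'⟩ := (phi_rows_aux S hF b).mp ⟨a, hc⟩
    exact h2 _ ha' rfl

lemma phi_emptyCols (S : Setup k i j α β m) (hF : IsFilling D F) :
    emptyCols D (Phi D i j β m F) = emptyCols D F := by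
  ext a
  simp only [emptyCols, Set.mem_setOf_eq]
  constructor
  · rintro ⟨h1, h2⟩
    refine ⟨h1, ?_⟩
    rintro ⟨a', b⟩ hc rfl
    obtain ⟨b', hb'⟩ := (phi_cols_aux S hF a').mpr ⟨b, hc⟩
    exact h2 _ hb' rfl
  · rintro ⟨h1, h2⟩
    refine ⟨h1, ?_⟩
    rintro ⟨a', b⟩ hc rfl
    obtain ⟨b', hb'⟩ := (phi_cols_aux S hF a').mp ⟨b, hc⟩
    exact h2 _ hb' rfl

lemma phi_inverse (S : Setup k i j α β m) {m' : Fin k → Fin k}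
    (S' : Setup k i j β α m') (hF : IsFilling D F)
    (hav : ∀ x, ¬ OccAt D F α x) :
    Phi D i j α m' (Phi D i j β m F) = F := by
  have hG : IsFilling D (Phi D i j β m F) := phi_filling S hF
  have hGocc := phi_occ_iff S hF hav
  have hmm' : ∀ s, m (m' s) = s := by
    intro s
    apply S.hβ.1
    rw [S.hm1, S'.hm1]
  ext ⟨a, b⟩
  by_cases hm : ∃ x, OccAt D F β x ∧ MidC i j x a
  · obtain ⟨x, hx, hmid⟩ := hm
    have hjk := S.hjk
    obtain ⟨hmid1, hmid2⟩ := hmid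
    have hsk : a - x < k := by omega
    set s : Fin k := ⟨a - x, hsk⟩ with hsdef
    have hs : x + (s : ℕ) = a := by simp [hsdef]; omega
    have hsmid : i ≤ (s : ℕ) ∧ (s : ℕ) < j := by simp [hsdef]; omega
    have hGx : OccAt D (Phi D i j β m F) α x := phi_occ S hF hx
    have hmid' := S'.hm3 s hsmid.1 hsmid.2
    have e1 := phi_mem_mid (b := b) S' hG hGx ⟨hmid1, hmid2⟩ s hs
    have e2 := phi_mem_mid (b := b) S hF hx
      (⟨by omega, by omega⟩ : MidC i j x (x + ((m' s) : ℕ))) (m' s) rfl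
    rw [hmm' s, hs] at e2
    exact e1.trans e2
  · push_neg at hm
    have hm' : ∀ x, OccAt D (Phi D i j β m F) α x → ¬ MidC i j x a := fun x hx =>
      hm x ((hGocc x).mp hx)
    exact (phi_mem_nomid (m := m') hm').trans (phi_mem_nomid (m := m) hm)

end Aux4
section Aux5

lemma mk_setup {k i j : ℕ} {α β : Fin k → ℕ}
    (hk : 3 ≤ k) (hi : 1 ≤ i) (hij : i < j) (hjk : j < k)
    (hα : IsPermWord α) (hβ : IsPermWord β) (hne : α ≠ β)
    (hagree : ∀ p : Fin k, ((p : ℕ) < i ∨ j ≤ (p : ℕ)) → α p = β p)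
    (hrearr : β '' {p : Fin k | i ≤ (p : ℕ) ∧ (p : ℕ) < j} =
              α '' {p : Fin k | i ≤ (p : ℕ) ∧ (p : ℕ) < j})
    (hno : ∀ ρ₁ : Fin k → ℕ, (ρ₁ = α ∨ ρ₁ = β) → ∀ ρ₂ : Fin k → ℕ,
      (ρ₂ = α ∨ ρ₂ = β) → ∀ z, min i (k - j) < z → z < k → ¬ OrderIsoAt ρ₁ ρ₂ z) :
    ∃ m : Fin k → Fin k, Setup k i j α β m := by
  have hex : ∀ s : Fin k, ∃ p : Fin k, β p = α s := by
    intro s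
    have h1 : α s ∈ Set.range α := ⟨s, rfl⟩
    rw [hα.2, ← hβ.2] at h1
    exact h1
  choose m hm1 using hex
  have hm2 : ∀ s : Fin k, ((s : ℕ) < i ∨ j ≤ (s : ℕ)) → m s = s := by
    intro s hs
    apply hβ.1
    rw [hm1 s, hagree s hs]
  refine ⟨m, hk, hi, hij, hjk, hα, hβ, hne, hm1, hm2, ?_, ?_, hno⟩
  · intro s hs1 hs2
    have h1 : α s ∈ α '' {p : Fin k | i ≤ (p : ℕ) ∧ (p : ℕ) < j} :=
      ⟨s, ⟨hs1, hs2⟩, rfl⟩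
    rw [← hrearr] at h1
    obtain ⟨p, hp, hpe⟩ := h1
    have : m s = p := by
      apply hβ.1
      rw [hm1 s, hpe]
    rw [this]
    exact ⟨hp.1, hp.2⟩
  · apply Finite.injective_iff_surjective.mp
    intro s t hst
    apply hα.1
    rw [← hm1 s, ← hm1 t, hst]

end Aux5

/-- Theorem (bijective filling-shape-Wilf-equivalences for consecutive patterns):
if `σ, τ ∈ S_k` agree outside positions `i+1, …, j`, the middle blocks are
rearrangements of each other, and the four nonoverlapping criteria hold for all
`min(i, k-j) < z < k`, then the consecutive patterns `σ ≡_fs τ`. -/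
theorem stmt0 (k i j : ℕ) (hk : 3 ≤ k) (hi : 1 ≤ i) (hij : i < j) (hjk : j < k)
    (σ τ : Fin k → ℕ) (hσ : IsPermWord σ) (hτ : IsPermWord τ)
    (hagree : ∀ p : Fin k, ((p : ℕ) < i ∨ j ≤ (p : ℕ)) → σ p = τ p)
    (hrearr : τ '' {p : Fin k | i ≤ (p : ℕ) ∧ (p : ℕ) < j} =
              σ '' {p : Fin k | i ≤ (p : ℕ) ∧ (p : ℕ) < j})
    (hnonov : ∀ z : ℕ, min i (k - j) < z → z < k →
      ¬ OrderIsoAt σ σ z ∧ ¬ OrderIsoAt σ τ z ∧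
      ¬ OrderIsoAt τ σ z ∧ ¬ OrderIsoAt τ τ z) :
    FSWilfEquiv σ (Set.Icc 1 (k - 1)) τ (Set.Icc 1 (k - 1)) := by
  by_cases hστ : σ = τ
  · subst hστ
    intro D R C
    rfl
  · intro D R C
    have hk1 : 1 ≤ k := by omega
    have hno4 : ∀ ρ₁ : Fin k → ℕ, (ρ₁ = σ ∨ ρ₁ = τ) → ∀ ρ₂ : Fin k → ℕ,
        (ρ₂ = σ ∨ ρ₂ = τ) → ∀ z, min i (k - j) < z → z < k →
        ¬ OrderIsoAt ρ₁ ρ₂ z := by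
      rintro ρ₁ (rfl | rfl) ρ₂ (rfl | rfl) z h1 h2
      · exact (hnonov z h1 h2).1
      · exact (hnonov z h1 h2).2.1
      · exact (hnonov z h1 h2).2.2.1
      · exact (hnonov z h1 h2).2.2.2
    have hno4' : ∀ ρ₁ : Fin k → ℕ, (ρ₁ = τ ∨ ρ₁ = σ) → ∀ ρ₂ : Fin k → ℕ,
        (ρ₂ = τ ∨ ρ₂ = σ) → ∀ z, min i (k - j) < z → z < k →
        ¬ OrderIsoAt ρ₁ ρ₂ z := fun ρ₁ h1 ρ₂ h2 =>
      hno4 ρ₁ h1.symm ρ₂ h2.symm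
    obtain ⟨m, S⟩ := mk_setup hk hi hij hjk hσ hτ hστ hagree hrearr hno4
    obtain ⟨m', S'⟩ := mk_setup hk hi hij hjk hτ hσ (Ne.symm hστ)
      (fun p hp => (hagree p hp).symm) hrearr.symm hno4'
    set A := {F : Set (ℕ × ℕ) | IsFilling D F ∧
      ¬ FillingContains D F σ (Set.Icc 1 (k - 1)) ∧
      emptyRows D F = R ∧ emptyCols D F = C} with hAdef
    set B := {F : Set (ℕ × ℕ) | IsFilling D F ∧
      ¬ FillingContains D F τ (Set.Icc 1 (k - 1)) ∧
      emptyRows D F = R ∧ emptyCols D F = C} with hBdef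
    have avA : ∀ F ∈ A, ∀ x, ¬ OccAt D F σ x := by
      intro F hF x hx
      exact hF.2.1 ((fc_iff D F σ hk1).mpr ⟨x, hx⟩)
    have avB : ∀ F ∈ B, ∀ x, ¬ OccAt D F τ x := by
      intro F hF x hx
      exact hF.2.1 ((fc_iff D F τ hk1).mpr ⟨x, hx⟩)
    have key1 : ∀ F ∈ A, Phi D i j τ m F ∈ B ∧
        Phi D i j σ m' (Phi D i j τ m F) = F := by
      intro F hFA
      obtain ⟨hF, hnc, hR, hC⟩ := hFA
      have hav := avA F ⟨hF, hnc, hR, hC⟩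
      refine ⟨⟨phi_filling S hF, ?_, ?_, ?_⟩, phi_inverse S S' hF hav⟩
      · intro hcont
        obtain ⟨x, hx⟩ := (fc_iff D _ τ hk1).mp hcont
        exact phi_avoids S hF hav x hx
      · rw [phi_emptyRows S hF]; exact hR
      · rw [phi_emptyCols S hF]; exact hC
    have key2 : ∀ G ∈ B, Phi D i j σ m' G ∈ A ∧
        Phi D i j τ m (Phi D i j σ m' G) = G := by
      intro G hGB
      obtain ⟨hG, hnc, hR, hC⟩ := hGB
      have hav := avB G ⟨hG, hnc, hR, hC⟩
      refine ⟨⟨phi_filling S' hG, ?_, ?_, ?_⟩, phi_inverse S' S hG hav⟩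
      · intro hcont
        obtain ⟨x, hx⟩ := (fc_iff D _ σ hk1).mp hcont
        exact phi_avoids S' hG hav x hx
      · rw [phi_emptyRows S' hG]; exact hR
      · rw [phi_emptyCols S' hG]; exact hC
    have himage : (Phi D i j τ m) '' A = B := by
      apply Set.eq_of_subset_of_subset
      · rintro G ⟨F, hFA, rfl⟩
        exact (key1 F hFA).1
      · intro G hGB
        exact ⟨Phi D i j σ m' G, (key2 G hGB).1, (key2 G hGB).2⟩
    have hinj : Set.InjOn (Phi D i j τ m) A := by
      intro F₁ h₁ F₂ h₂ he
      rw [← (key1 F₁ h₁).2, ← (key1 F₂ h₂).2, he]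
    calc A.ncard = ((Phi D i j τ m) '' A).ncard :=
          (Set.ncard_image_of_injOn hinj).symm
      _ = B.ncard := by rw [himage]
end

section
/- The following filling-shape-Wilf-equivalences hold among consecutive patterns of length 4: 1342 ≡_fs 1432, 2341 ≡_fs 2431, 4213 ≡_fs 4123, and 3214 ≡_fs 3124. -/
/-!
Each pair differs by exchanging the two middle letters, and in all eight patterns both outer
letters lie on the same side of both middle letters. Fix the corresponding asymmetric relation
`lt` and call four consecutive columns of a filling a swap site when their selected values have
this shape and their square box lies in the diagram. Two swap sites share at most one column, so
exchanging the two middle columns of every swap site is well defined. This exchange keeps the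
swap sites, hence is an involution; it keeps the diagram, the empty rows and the empty columns,
and it turns an occurrence of either pattern into an occurrence of the other one.
-/

lemma IsFilling.snd_eq {D : YoungShape} {F : Set (ℕ × ℕ)} (hF : IsFilling D F) {x a b : ℕ}
    (ha : (x, a) ∈ F) (hb : (x, b) ∈ F) : a = b :=
  congrArg Prod.snd (hF.2.1 _ ha _ hb rfl)

lemma IsFilling.fst_eq {D : YoungShape} {F : Set (ℕ × ℕ)} (hF : IsFilling D F) {x y a : ℕ}
    (hx : (x, a) ∈ F) (hy : (y, a) ∈ F) : x = y :=
  congrArg Prod.fst (hF.2.2 _ hx _ hy rfl)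

lemma emptyRows_congr {D : YoungShape} {F G : Set (ℕ × ℕ)}
    (h : ∀ r, (∃ x, (x, r) ∈ G) ↔ ∃ x, (x, r) ∈ F) : emptyRows D G = emptyRows D F := by
  have key : ∀ (H : Set (ℕ × ℕ)) (r : ℕ), (∀ p ∈ H, p.2 ≠ r) ↔ ¬ ∃ x, (x, r) ∈ H := by
    simp only [ne_eq, Prod.forall, not_exists]
    exact fun H r => ⟨fun h x hx => h x r hx rfl, fun h a b hab hbr => h a (hbr ▸ hab)⟩
  ext r
  simp only [emptyRows, Set.mem_ofPred_eq, key, h]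

lemma emptyCols_congr {D : YoungShape} {F G : Set (ℕ × ℕ)}
    (h : ∀ x, (∃ r, (x, r) ∈ G) ↔ ∃ r, (x, r) ∈ F) : emptyCols D G = emptyCols D F := by
  have key : ∀ (H : Set (ℕ × ℕ)) (x : ℕ), (∀ p ∈ H, p.1 ≠ x) ↔ ¬ ∃ r, (x, r) ∈ H := by
    simp only [ne_eq, Prod.forall, not_exists]
    exact fun H x => ⟨fun h r hr => h x r hr rfl, fun h a b hab hax => h b (hax ▸ hab)⟩
  ext x
  simp only [emptyCols, Set.mem_ofPred_eq, key, h]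

lemma fsWilfEquiv_of_involutive {k : ℕ} {σ τ : Fin k → ℕ} {Tσ Tτ : Set ℕ}
    (φ : YoungShape → Set (ℕ × ℕ) → Set (ℕ × ℕ))
    (hfill : ∀ D F, IsFilling D F → IsFilling D (φ D F))
    (hinv : ∀ D F, IsFilling D F → φ D (φ D F) = F)
    (hrows : ∀ D F, IsFilling D F → emptyRows D (φ D F) = emptyRows D F)
    (hcols : ∀ D F, IsFilling D F → emptyCols D (φ D F) = emptyCols D F)
    (hσ : ∀ D F, IsFilling D F → FillingContains D (φ D F) σ Tσ → FillingContains D F τ Tτ)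
    (hτ : ∀ D F, IsFilling D F → FillingContains D (φ D F) τ Tτ → FillingContains D F σ Tσ) :
    FSWilfEquiv σ Tσ τ Tτ := by
  intro D R C
  refine (Set.InvOn.bijOn (f := φ D) (f' := φ D) ⟨fun F hF => hinv D F hF.1,
    fun F hF => hinv D F hF.1⟩ ?_ ?_).ncard_eq
  · rintro F ⟨hF, hav, rfl, rfl⟩
    exact ⟨hfill D F hF, fun h => hav (hτ D F hF h), hrows D F hF, hcols D F hF⟩
  · rintro F ⟨hF, hav, rfl, rfl⟩
    exact ⟨hfill D F hF, fun h => hav (hσ D F hF h), hrows D F hF, hcols D F hF⟩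

lemma eq_add_of_consecutive {k : ℕ} {idx : Fin (k + 1) → ℕ}
    (hadj : ∀ j (h : j + 1 < k + 1), idx ⟨j + 1, h⟩ = idx ⟨j, by omega⟩ + 1) (s : Fin (k + 1)) :
    idx s = idx 0 + s := by
  obtain ⟨s, hs⟩ := s
  induction s with
  | zero => rfl
  | succ j ih => rw [hadj j hs, ih (by omega), add_assoc]

section SwapSites

variable (lt : ℕ → ℕ → Prop)

def OuterLtInner (v : Fin 4 → ℕ) : Prop :=
  lt (v 0) (v 1) ∧ lt (v 0) (v 2) ∧ lt (v 3) (v 1) ∧ lt (v 3) (v 2)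

def IsSwapSite (D : YoungShape) (F : Set (ℕ × ℕ)) (c : ℕ) : Prop :=
  ∃ r : Fin 4 → ℕ, (∀ i : Fin 4, (c + i, r i) ∈ F) ∧ (∀ i j : Fin 4, (c + i, r j) ∈ D.cells) ∧
    OuterLtInner lt r

-- The truncated subtractions are harmless: a swap site `c` has `1 ≤ c`.
open Classical in
noncomputable def swapCol (D : YoungShape) (F : Set (ℕ × ℕ)) (x : ℕ) : ℕ :=
  if IsSwapSite lt D F (x - 1) then x + 1 else if IsSwapSite lt D F (x - 2) then x - 1 else x

def swapFilling (D : YoungShape) (F : Set (ℕ × ℕ)) : Set (ℕ × ℕ) :=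
  {p | (swapCol lt D F p.1, p.2) ∈ F}

variable {lt} {D : YoungShape} {F : Set (ℕ × ℕ)}

lemma outerLtInner_comp_swap {v : Fin 4 → ℕ} (h : OuterLtInner lt v) :
    OuterLtInner lt (v ∘ Equiv.swap 1 2) :=
  ⟨h.2.1, h.1, h.2.2.2, h.2.2.1⟩

lemma outerLtInner_lt_of_orderIso {v τ : Fin 4 → ℕ} (hv : ∀ s t, v s < v t ↔ τ s < τ t)
    (hτ : OuterLtInner (· < ·) τ) : OuterLtInner (· < ·) v :=
  ⟨(hv 0 1).2 hτ.1, (hv 0 2).2 hτ.2.1, (hv 3 1).2 hτ.2.2.1, (hv 3 2).2 hτ.2.2.2⟩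

lemma outerLtInner_gt_of_orderIso {v τ : Fin 4 → ℕ} (hv : ∀ s t, v s < v t ↔ τ s < τ t)
    (hτ : OuterLtInner (· > ·) τ) : OuterLtInner (· > ·) v :=
  ⟨(hv 1 0).2 hτ.1, (hv 2 0).2 hτ.2.1, (hv 1 3).2 hτ.2.2.1, (hv 2 3).2 hτ.2.2.2⟩

@[simp]
lemma mem_swapFilling {x r : ℕ} : (x, r) ∈ swapFilling lt D F ↔ (swapCol lt D F x, r) ∈ F :=
  Iff.rfl

lemma IsSwapSite.one_le {c : ℕ} (hc : IsSwapSite lt D F c) : 1 ≤ c := by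
  obtain ⟨r, -, hbox, -⟩ := hc
  simpa using (D.pos _ (hbox 0 0)).1

lemma swapCol_eq_self_or (x : ℕ) :
    swapCol lt D F x = x ∨ ∃ c, IsSwapSite lt D F c ∧ ∃ i : Fin 4, (i = 1 ∨ i = 2) ∧ x = c + i := by
  unfold swapCol
  split_ifs with h1 h2
  · exact .inr ⟨x - 1, h1, 1, .inl rfl, by have := h1.one_le; simp; omega⟩
  · exact .inr ⟨x - 2, h2, 2, .inr rfl, by have := h2.one_le; simp; omega⟩
  · exact .inl rfl

lemma swapCol_of_not_isSwapSite {x : ℕ} (h1 : ¬ IsSwapSite lt D F (x - 1))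
    (h2 : ¬ IsSwapSite lt D F (x - 2)) : swapCol lt D F x = x := by
  rw [swapCol, if_neg h1, if_neg h2]

variable [Std.Asymm lt]

lemma IsSwapSite.eq_of_le (hF : IsFilling D F) {b c : ℕ} (hb : IsSwapSite lt D F b)
    (hc : IsSwapSite lt D F c) (hbc : b ≤ c) (hcb : c ≤ b + 2) : b = c := by
  obtain ⟨r, hr, -, -, -, hr31, hr32⟩ := hb
  obtain ⟨s, hs, -, hs01, hs02, -, -⟩ := hc
  obtain rfl | rfl | rfl : c = b ∨ c = b + 1 ∨ c = b + 2 := by omega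
  · rfl
  · have h1 : r 1 = s 0 := hF.snd_eq (hr 1) (by simpa using hs 0)
    have h3 : r 3 = s 2 := hF.snd_eq (hr 3) (by simpa [add_assoc] using hs 2)
    exact absurd (h1 ▸ h3 ▸ hs02) (asymm hr31)
  · have h2 : r 2 = s 0 := hF.snd_eq (hr 2) (by simpa using hs 0)
    have h3 : r 3 = s 1 := hF.snd_eq (hr 3) (by simpa [add_assoc] using hs 1)
    exact absurd (h2 ▸ h3 ▸ hs01) (asymm hr32)

lemma IsSwapSite.eq_of_near (hF : IsFilling D F) {b c : ℕ} (hb : IsSwapSite lt D F b)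
    (hc : IsSwapSite lt D F c) (hbc : b ≤ c + 2) (hcb : c ≤ b + 2) : b = c := by
  rcases le_total b c with h | h
  · exact hb.eq_of_le hF hc h hcb
  · exact (hc.eq_of_le hF hb h hbc).symm

lemma swapCol_add (hF : IsFilling D F) {c : ℕ} (hc : IsSwapSite lt D F c) (i : Fin 4) :
    swapCol lt D F (c + i) = c + Equiv.swap (1 : Fin 4) 2 i := by
  have hc1 := hc.one_le
  have hfar : ∀ b, b ≠ c → b ≤ c + 2 → c ≤ b + 2 → ¬ IsSwapSite lt D F b :=
    fun b hbc h1 h2 hb => hbc (hb.eq_of_near hF hc h1 h2)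
  fin_cases i
  · show swapCol lt D F (c + 0) = c + 0
    exact swapCol_of_not_isSwapSite (hfar _ (by omega) (by omega) (by omega))
      (hfar _ (by omega) (by omega) (by omega))
  · show swapCol lt D F (c + 1) = c + 2
    rw [swapCol, if_pos (by simpa using hc)]
  · show swapCol lt D F (c + 2) = c + 1
    rw [swapCol, if_neg (hfar _ (by omega) (by omega) (by omega)), if_pos (by simpa using hc)]
    omega
  · show swapCol lt D F (c + 3) = c + 3
    exact swapCol_of_not_isSwapSite (hfar _ (by omega) (by omega) (by omega))
      (hfar _ (by omega) (by omega) (by omega))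

lemma swapCol_swapCol (hF : IsFilling D F) (x : ℕ) : swapCol lt D F (swapCol lt D F x) = x := by
  rcases swapCol_eq_self_or x with h | ⟨c, hc, i, -, rfl⟩
  · rw [h, h]
  · rw [swapCol_add hF hc, swapCol_add hF hc, Equiv.swap_apply_self]

lemma isFilling_swapFilling (hF : IsFilling D F) : IsFilling D (swapFilling lt D F) := by
  refine ⟨?_, ?_, ?_⟩
  · rintro ⟨x, r⟩ (h : (swapCol lt D F x, r) ∈ F)
    rcases swapCol_eq_self_or x with hx | ⟨c, hc, i, -, rfl⟩
    · exact hF.1 (hx ▸ h)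
    · rw [swapCol_add hF hc] at h
      obtain ⟨v, hv, hbox, -⟩ := hc
      rw [hF.snd_eq h (hv _)]
      exact hbox _ _
  · rintro ⟨x, a⟩ ha ⟨x', b⟩ hb (rfl : x = x')
    rw [hF.snd_eq (mem_swapFilling.1 ha) (mem_swapFilling.1 hb)]
  · rintro ⟨x, a⟩ ha ⟨y, a'⟩ hb (rfl : a = a')
    rw [← swapCol_swapCol (lt := lt) hF x, hF.fst_eq (mem_swapFilling.1 ha) (mem_swapFilling.1 hb),
      swapCol_swapCol hF y]

lemma isSwapSite_swapFilling (hF : IsFilling D F) {c : ℕ} (hc : IsSwapSite lt D F c) :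
    IsSwapSite lt D (swapFilling lt D F) c := by
  obtain ⟨r, hr, hbox, hshape⟩ := id hc
  refine ⟨r ∘ Equiv.swap 1 2, fun i => ?_, fun i j => hbox i _, outerLtInner_comp_swap hshape⟩
  rw [Function.comp_apply, mem_swapFilling, swapCol_add hF hc]
  exact hr _

lemma isSwapSite_of_isSwapSite_swapFilling (hF : IsFilling D F) {c : ℕ}
    (hc : IsSwapSite lt D (swapFilling lt D F) c) : IsSwapSite lt D F c := by
  by_cases hnear : ∃ b, IsSwapSite lt D F b ∧ b ≤ c + 2 ∧ c ≤ b + 2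
  · obtain ⟨b, hb, h1, h2⟩ := hnear
    rwa [(isSwapSite_swapFilling hF hb).eq_of_near (isFilling_swapFilling hF) hc h1 h2] at hb
  · have hfix : ∀ i : Fin 4, swapCol lt D F (c + i) = c + i := fun i => by
      rcases swapCol_eq_self_or (c + i) with h | ⟨b, hb, j, hj, hij⟩
      · exact h
      · have : (j : ℕ) = 1 ∨ (j : ℕ) = 2 := by rcases hj with rfl | rfl <;> simp
        exact absurd ⟨b, hb, by omega, by omega⟩ hnear
    obtain ⟨r, hr, hbox, hshape⟩ := hc
    exact ⟨r, fun i => by simpa [hfix] using hr i, hbox, hshape⟩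

lemma isSwapSite_swapFilling_iff (hF : IsFilling D F) {c : ℕ} :
    IsSwapSite lt D (swapFilling lt D F) c ↔ IsSwapSite lt D F c :=
  ⟨isSwapSite_of_isSwapSite_swapFilling hF, isSwapSite_swapFilling hF⟩

lemma swapFilling_swapFilling (hF : IsFilling D F) :
    swapFilling lt D (swapFilling lt D F) = F := by
  have hcol : swapCol lt D (swapFilling lt D F) = swapCol lt D F := by
    funext x
    rw [swapCol, swapCol, isSwapSite_swapFilling_iff hF, isSwapSite_swapFilling_iff hF]
  ext ⟨x, r⟩
  rw [mem_swapFilling, hcol, mem_swapFilling, swapCol_swapCol hF]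

lemma emptyRows_swapFilling (hF : IsFilling D F) :
    emptyRows D (swapFilling lt D F) = emptyRows D F :=
  emptyRows_congr fun _ => ⟨fun ⟨_, h⟩ => ⟨_, h⟩,
    fun ⟨y, h⟩ => ⟨swapCol lt D F y, by rwa [mem_swapFilling, swapCol_swapCol hF]⟩⟩

lemma emptyCols_swapFilling (hF : IsFilling D F) :
    emptyCols D (swapFilling lt D F) = emptyCols D F := by
  refine emptyCols_congr fun x => ?_
  rcases swapCol_eq_self_or (lt := lt) (D := D) (F := F) x with h | ⟨c, hc, i, -, rfl⟩
  · simp only [mem_swapFilling, h]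
  · simp only [mem_swapFilling, swapCol_add hF hc]
    obtain ⟨r, hr, -⟩ := hc
    exact ⟨fun _ => ⟨_, hr i⟩, fun _ => ⟨_, hr _⟩⟩

lemma FillingContains.of_swapFilling (hF : IsFilling D F) {τ : Fin 4 → ℕ}
    (hτ : ∀ v : Fin 4 → ℕ, (∀ s t, v s < v t ↔ τ s < τ t) → OuterLtInner lt v)
    (h : FillingContains D (swapFilling lt D F) τ (Set.Icc 1 3)) :
    FillingContains D F (τ ∘ Equiv.swap 1 2) (Set.Icc 1 3) := by
  obtain ⟨idx, v, hmono, hmem, hiso, hbox, hadj⟩ := h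
  have hidx : ∀ s, idx s = idx 0 + s :=
    eq_add_of_consecutive fun j hj => hadj j ⟨by omega, by omega⟩ hj
  have hsite : IsSwapSite lt D F (idx 0) := isSwapSite_of_isSwapSite_swapFilling hF
    ⟨v, fun i => hidx i ▸ hmem i, fun i j => hidx i ▸ hbox i j, hτ v hiso⟩
  refine ⟨idx, v ∘ Equiv.swap 1 2, hmono, fun s => ?_, fun s t => hiso _ _, fun s t => hbox s _,
    hadj⟩
  have := hmem (Equiv.swap 1 2 s)
  rwa [hidx, mem_swapFilling, swapCol_add hF hsite, Equiv.swap_apply_self, ← hidx] at this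

end SwapSites

theorem fsWilfEquiv_of_swap_middle (lt : ℕ → ℕ → Prop) [Std.Asymm lt] {σ τ : Fin 4 → ℕ}
    (hστ : σ = τ ∘ Equiv.swap 1 2)
    (hτ : ∀ v : Fin 4 → ℕ, (∀ s t, v s < v t ↔ τ s < τ t) → OuterLtInner lt v) :
    FSWilfEquiv σ (Set.Icc 1 3) τ (Set.Icc 1 3) := by
  have hτσ : τ = σ ∘ Equiv.swap 1 2 := by
    funext i
    simp [hστ]
  have hσ : ∀ v : Fin 4 → ℕ, (∀ s t, v s < v t ↔ σ s < σ t) → OuterLtInner lt v := by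
    intro v hv
    have := outerLtInner_comp_swap (hτ (v ∘ Equiv.swap 1 2) fun s t => by
      simpa [hστ] using hv (Equiv.swap 1 2 s) (Equiv.swap 1 2 t))
    simpa [Function.comp_def] using this
  refine fsWilfEquiv_of_involutive (swapFilling lt) (fun _ _ => isFilling_swapFilling)
    (fun _ _ => swapFilling_swapFilling) (fun _ _ => emptyRows_swapFilling)
    (fun _ _ => emptyCols_swapFilling) (fun _ _ hF h => ?_) (fun _ _ hF h => ?_)
  · rw [hτσ]; exact h.of_swapFilling hF hσ
  · rw [hστ]; exact h.of_swapFilling hF hτ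

/-- The four filling-shape-Wilf-equivalences of consecutive patterns of length 4:
`1342 ≡_fs 1432`, `2341 ≡_fs 2431`, `4213 ≡_fs 4123`, `3214 ≡_fs 3124`. -/
theorem stmt1 :
    FSWilfEquiv (![1,3,4,2] : Fin 4 → ℕ) (Set.Icc 1 3) (![1,4,3,2] : Fin 4 → ℕ) (Set.Icc 1 3) ∧
    FSWilfEquiv (![2,3,4,1] : Fin 4 → ℕ) (Set.Icc 1 3) (![2,4,3,1] : Fin 4 → ℕ) (Set.Icc 1 3) ∧
    FSWilfEquiv (![4,2,1,3] : Fin 4 → ℕ) (Set.Icc 1 3) (![4,1,2,3] : Fin 4 → ℕ) (Set.Icc 1 3) ∧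
    FSWilfEquiv (![3,2,1,4] : Fin 4 → ℕ) (Set.Icc 1 3) (![3,1,2,4] : Fin 4 → ℕ) (Set.Icc 1 3) := by
  refine ⟨?_, ?_, ?_, ?_⟩
  · exact fsWilfEquiv_of_swap_middle (· < ·) (by decide)
      fun _ hv => outerLtInner_lt_of_orderIso hv (by unfold OuterLtInner; decide)
  · exact fsWilfEquiv_of_swap_middle (· < ·) (by decide)
      fun _ hv => outerLtInner_lt_of_orderIso hv (by unfold OuterLtInner; decide)
  · exact fsWilfEquiv_of_swap_middle (· > ·) (by decide)
      fun _ hv => outerLtInner_gt_of_orderIso hv (by unfold OuterLtInner; decide)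
  · exact fsWilfEquiv_of_swap_middle (· > ·) (by decide)
      fun _ hv => outerLtInner_gt_of_orderIso hv (by unfold OuterLtInner; decide)
end

section
/- The consecutive patterns of length 5 in the chain 13452, 13542, 14352, 14532, 15342, 15432 are pairwise filling-shape-Wilf-equivalent: 13452 ≡_fs 13542 ≡_fs 14352 ≡_fs 14532 ≡_fs 15342 ≡_fs 15432. -/
/-- Filling-shape-Wilf-equivalence of length-5 consecutive patterns
(adjacency set `{1,2,3,4}`). -/
def FS5 (a b : Fin 5 → ℕ) : Prop :=
  FSWilfEquiv a (Set.Icc 1 4) b (Set.Icc 1 4)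

namespace FSP

/-- cells of a candidate occurrence: column `c+i` holds value `v i`. -/
def C5 (F : Set (ℕ × ℕ)) (c : ℕ) (v : Fin 5 → ℕ) : Prop :=
  ∀ i : Fin 5, ((c + (i : ℕ), v i)) ∈ F

def Rct (D : YoungShape) (c : ℕ) (v : Fin 5 → ℕ) : Prop :=
  ∀ i j : Fin 5, ((c + (i : ℕ), v j)) ∈ D.cells

def Occ (σ v : Fin 5 → ℕ) : Prop := ∀ s t : Fin 5, v s < v t ↔ σ s < σ t

def Good (σ : Fin 5 → ℕ) : Prop :=
  σ 0 = 1 ∧ σ 4 = 2 ∧ 3 ≤ σ 1 ∧ σ 1 ≤ 5 ∧ 3 ≤ σ 2 ∧ σ 2 ≤ 5 ∧ 3 ≤ σ 3 ∧ σ 3 ≤ 5 ∧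
    σ 1 ≠ σ 2 ∧ σ 1 ≠ σ 3 ∧ σ 2 ≠ σ 3

def Shp (v : Fin 5 → ℕ) : Prop := v 0 < v 4 ∧ v 4 < v 1 ∧ v 4 < v 2 ∧ v 4 < v 3

def m1 (v : Fin 5 → ℕ) : ℕ :=
  if v 1 ≤ v 2 then (if v 1 ≤ v 3 then v 1 else v 3) else (if v 2 ≤ v 3 then v 2 else v 3)
def m3 (v : Fin 5 → ℕ) : ℕ :=
  if v 1 ≤ v 2 then (if v 2 ≤ v 3 then v 3 else v 2) else (if v 1 ≤ v 3 then v 3 else v 1)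
def m2 (v : Fin 5 → ℕ) : ℕ := v 1 + v 2 + v 3 - m1 v - m3 v

def w (v : Fin 5 → ℕ) (r : ℕ) : ℕ :=
  if r = 1 then v 0 else if r = 2 then v 4 else if r = 3 then m1 v else if r = 4 then m2 v else m3 v

def newv (α v : Fin 5 → ℕ) : Fin 5 → ℕ := fun i => w v (α i)

/-- distinct middles -/
def Dm (v : Fin 5 → ℕ) : Prop := v 1 ≠ v 2 ∧ v 1 ≠ v 3 ∧ v 2 ≠ v 3


lemma fin5_cases (i : Fin 5) : i = 0 ∨ i = 1 ∨ i = 2 ∨ i = 3 ∨ i = 4 := by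
  revert i; decide

@[simp] lemma cv0 : ((0 : Fin 5) : ℕ) = 0 := rfl
@[simp] lemma cv1 : ((1 : Fin 5) : ℕ) = 1 := rfl
@[simp] lemma cv2 : ((2 : Fin 5) : ℕ) = 2 := rfl
@[simp] lemma cv3 : ((3 : Fin 5) : ℕ) = 3 := rfl
@[simp] lemma cv4 : ((4 : Fin 5) : ℕ) = 4 := rfl

lemma mfacts {v : Fin 5 → ℕ} (h : Dm v) :
    m1 v < m2 v ∧ m2 v < m3 v ∧
    (m1 v = v 1 ∨ m1 v = v 2 ∨ m1 v = v 3) ∧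
    (m2 v = v 1 ∨ m2 v = v 2 ∨ m2 v = v 3) ∧
    (m3 v = v 1 ∨ m3 v = v 2 ∨ m3 v = v 3) ∧
    (v 1 = m1 v ∨ v 1 = m2 v ∨ v 1 = m3 v) ∧
    (v 2 = m1 v ∨ v 2 = m2 v ∨ v 2 = m3 v) ∧
    (v 3 = m1 v ∨ v 3 = m2 v ∨ v 3 = m3 v) := by
  obtain ⟨a, b, c⟩ := h
  simp only [m1, m2, m3]
  split_ifs <;> omega

lemma shp_of_occ {σ v : Fin 5 → ℕ} (hσ : Good σ) (h : Occ σ v) : Shp v := by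
  obtain ⟨h0, h4, g1, g1', g2, g2', g3, g3', _, _, _⟩ := hσ
  refine ⟨(h 0 4).2 ?_, (h 4 1).2 ?_, (h 4 2).2 ?_, (h 4 3).2 ?_⟩ <;> omega

lemma shp_m {v : Fin 5 → ℕ} (hs : Shp v) (hd : Dm v) :
    v 0 < v 4 ∧ v 4 < m1 v ∧ m1 v < m2 v ∧ m2 v < m3 v := by
  have hm := mfacts hd
  obtain ⟨x, y, z, u⟩ := hs
  omega

/-- `w v` is strictly monotone on ranks 1..5. -/
lemma w_mono {v : Fin 5 → ℕ} (hs : Shp v) (hd : Dm v) {r r' : ℕ}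
    (h1 : 1 ≤ r) (h2 : r ≤ 5) (h1' : 1 ≤ r') (h2' : r' ≤ 5) :
    w v r < w v r' ↔ r < r' := by
  have hm := shp_m hs hd
  unfold w
  interval_cases r <;> interval_cases r' <;> simp <;> omega

lemma good_rank {σ : Fin 5 → ℕ} (hσ : Good σ) (i : Fin 5) : 1 ≤ σ i ∧ σ i ≤ 5 := by
  obtain ⟨h0, h4, g1, g1', g2, g2', g3, g3', _, _, _⟩ := hσ
  rcases fin5_cases i with h | h | h | h | h <;> subst h <;> omega

lemma occ_newv {σ v : Fin 5 → ℕ} (hσ : Good σ) (hs : Shp v) (hd : Dm v) :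
    Occ σ (newv σ v) := by
  intro s t
  have h1 := good_rank hσ s
  have h2 := good_rank hσ t
  exact w_mono hs hd h1.1 h1.2 h2.1 h2.2

lemma newv_zero {σ v : Fin 5 → ℕ} (hσ : Good σ) : newv σ v 0 = v 0 := by
  simp [newv, w, hσ.1]
lemma newv_four {σ v : Fin 5 → ℕ} (hσ : Good σ) : newv σ v 4 = v 4 := by
  simp [newv, w, hσ.2.1]

/-- If `v` already realizes the pattern `σ`, rearranging does nothing. -/
lemma newv_self {σ v : Fin 5 → ℕ} (hσ : Good σ) (h : Occ σ v) : newv σ v = v := by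
  have h12 := h 1 2
  have h13 := h 1 3
  have h23 := h 2 3
  obtain ⟨h0, h4, g1, g1', g2, g2', g3, g3', n12, n13, n23⟩ := hσ
  have e0 : newv σ v 0 = v 0 := by simp [newv, w, h0]
  have e4 : newv σ v 4 = v 4 := by simp [newv, w, h4]
  have e1 : newv σ v 1 = v 1 := by
    have hc : σ 1 = 3 ∨ σ 1 = 4 ∨ σ 1 = 5 := by omega
    rcases hc with h | h | h <;>
      simp only [newv, w, h, m1, m2, m3] <;> norm_num <;> split_ifs <;> omega
  have e2 : newv σ v 2 = v 2 := by
    have hc : σ 2 = 3 ∨ σ 2 = 4 ∨ σ 2 = 5 := by omega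
    rcases hc with h | h | h <;>
      simp only [newv, w, h, m1, m2, m3] <;> norm_num <;> split_ifs <;> omega
  have e3 : newv σ v 3 = v 3 := by
    have hc : σ 3 = 3 ∨ σ 3 = 4 ∨ σ 3 = 5 := by omega
    rcases hc with h | h | h <;>
      simp only [newv, w, h, m1, m2, m3] <;> norm_num <;> split_ifs <;> omega
  funext i
  rcases fin5_cases i with h | h | h | h | h <;> subst h <;> assumption

/-- values of `newv α v` at the five positions, classified. -/
lemma newv_mid {α v : Fin 5 → ℕ} (hα : Good α) (i : Fin 5) (h1 : 1 ≤ (i : ℕ)) (h3 : (i : ℕ) ≤ 3) :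
    newv α v i = m1 v ∨ newv α v i = m2 v ∨ newv α v i = m3 v := by
  have hr := good_rank hα i
  obtain ⟨h0, h4, g1, g1', g2, g2', g3, g3', n12, n13, n23⟩ := hα
  have hb : 3 ≤ α i ∧ α i ≤ 5 := by
    rcases fin5_cases i with h | h | h | h | h <;> subst h <;> simp at h1 h3 ⊢ <;> omega
  simp only [newv, w]
  split_ifs <;> omega

/-- the middle values of `v` are attained by `newv α v` at middle positions. -/
lemma val_newv {α v : Fin 5 → ℕ} (hα : Good α) (hd : Dm v) (j : Fin 5)
    (hj1 : 1 ≤ (j : ℕ)) (hj3 : (j : ℕ) ≤ 3) :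
    ∃ i : Fin 5, 1 ≤ (i : ℕ) ∧ (i : ℕ) ≤ 3 ∧ newv α v i = v j := by
  have hm := mfacts hd
  obtain ⟨h0, h4, g1, g1', g2, g2', g3, g3', n12, n13, n23⟩ := hα
  have key : ∀ r, 3 ≤ r → r ≤ 5 → ∃ i : Fin 5, 1 ≤ (i : ℕ) ∧ (i : ℕ) ≤ 3 ∧ newv α v i = w v r := by
    intro r a b
    have cov : α 1 = r ∨ α 2 = r ∨ α 3 = r := by omega
    rcases cov with h | h | h
    · exact ⟨1, by simp, by simp, by simp [newv, h]⟩
    · exact ⟨2, by simp, by simp, by simp [newv, h]⟩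
    · exact ⟨3, by simp, by simp, by simp [newv, h]⟩
  have w3 : w v 3 = m1 v := by simp [w]
  have w4 : w v 4 = m2 v := by simp [w]
  have w5 : w v 5 = m3 v := by simp [w]
  have hvj : v j = m1 v ∨ v j = m2 v ∨ v j = m3 v := by
    rcases fin5_cases j with h | h | h | h | h <;> subst h <;> simp at hj1 hj3 ⊢ <;> omega
  rcases hvj with h | h | h
  · obtain ⟨i, a, b, e⟩ := key 3 (by omega) (by omega); exact ⟨i, a, b, by rw [e, w3, h]⟩
  · obtain ⟨i, a, b, e⟩ := key 4 (by omega) (by omega); exact ⟨i, a, b, by rw [e, w4, h]⟩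
  · obtain ⟨i, a, b, e⟩ := key 5 (by omega) (by omega); exact ⟨i, a, b, by rw [e, w5, h]⟩


/-- value correspondence between `newv α v` and `v` at middle positions, plus `Dm`. -/
lemma newv_hits {α v : Fin 5 → ℕ} (hα : Good α) (hd : Dm v) (j : Fin 5)
    (hj1 : 1 ≤ (j : ℕ)) (hj3 : (j : ℕ) ≤ 3) :
    newv α v 1 = v j ∨ newv α v 2 = v j ∨ newv α v 3 = v j := by
  obtain ⟨i, a, b, e⟩ := val_newv hα hd j hj1 hj3
  rcases fin5_cases i with h | h | h | h | h <;> subst h <;> simp at a b ⊢ <;>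
    [exact Or.inl e; exact Or.inr (Or.inl e); exact Or.inr (Or.inr e)]

lemma newv_val3 {α v : Fin 5 → ℕ} (hα : Good α) (hd : Dm v) (i : Fin 5)
    (h1 : 1 ≤ (i : ℕ)) (h3 : (i : ℕ) ≤ 3) :
    newv α v i = v 1 ∨ newv α v i = v 2 ∨ newv α v i = v 3 := by
  have h := newv_mid (v := v) hα i h1 h3
  have hm := mfacts hd
  have a := hm.2.2.1
  have b := hm.2.2.2.1
  have c := hm.2.2.2.2.1
  clear hm
  omega

lemma newv_dm {α v : Fin 5 → ℕ} (hα : Good α) (hd : Dm v) : Dm (newv α v) := by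
  have t1 := newv_hits hα hd 1 (by simp) (by simp)
  have t2 := newv_hits hα hd 2 (by simp) (by simp)
  have t3 := newv_hits hα hd 3 (by simp) (by simp)
  have s1 := newv_val3 hα hd 1 (by simp) (by simp)
  have s2 := newv_val3 hα hd 2 (by simp) (by simp)
  have s3 := newv_val3 hα hd 3 (by simp) (by simp)
  obtain ⟨d1, d2, d3⟩ := hd
  refine ⟨?_, ?_, ?_⟩ <;> omega

/-- two realizations of the same pattern with the same endpoints and middle value sets agree. -/
lemma occ_unique {α u u' : Fin 5 → ℕ} (hα : Good α) (ho : Occ α u) (ho' : Occ α u')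
    (e0 : u 0 = u' 0) (e4 : u 4 = u' 4)
    (t1 : u 1 = u' 1 ∨ u 1 = u' 2 ∨ u 1 = u' 3)
    (t2 : u 2 = u' 1 ∨ u 2 = u' 2 ∨ u 2 = u' 3)
    (t3 : u 3 = u' 1 ∨ u 3 = u' 2 ∨ u 3 = u' 3) : u = u' := by
  have h12 := ho 1 2
  have h13 := ho 1 3
  have h23 := ho 2 3
  have h21 := ho 2 1
  have h31 := ho 3 1
  have h32 := ho 3 2
  have h12' := ho' 1 2
  have h13' := ho' 1 3
  have h23' := ho' 2 3
  have h21' := ho' 2 1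
  have h31' := ho' 3 1
  have h32' := ho' 3 2
  obtain ⟨h0, h4, g1, g1', g2, g2', g3, g3', n12, n13, n23⟩ := hα
  have e1 : u 1 = u' 1 := by omega
  have e2 : u 2 = u' 2 := by omega
  have e3 : u 3 = u' 3 := by omega
  funext i
  rcases fin5_cases i with h | h | h | h | h <;> subst h <;> assumption


/-! ### Filling utilities -/

lemma colU {D F} (hF : IsFilling D F) {x y y' : ℕ} (h : (x, y) ∈ F) (h' : (x, y') ∈ F) :
    y = y' := by
  have := hF.2.1 _ h _ h' rfl
  exact (Prod.ext_iff.1 this).2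

lemma rowU {D F} (hF : IsFilling D F) {x x' y : ℕ} (h : (x, y) ∈ F) (h' : (x', y) ∈ F) :
    x = x' := by
  have := hF.2.2 _ h _ h' rfl
  exact (Prod.ext_iff.1 this).1

lemma mem5 {F c v} (h : C5 F c v) (i : Fin 5) (x : ℕ) (e : c + (i : ℕ) = x) :
    (x, v i) ∈ F := e ▸ h i

lemma c5_unique {D F c v v'} (hF : IsFilling D F) (h : C5 F c v) (h' : C5 F c v') : v = v' :=
  funext fun i => colU hF (h i) (h' i)

lemma c5_dm {D F c v} (hF : IsFilling D F) (h : C5 F c v) : Dm v := by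
  refine ⟨fun e => ?_, fun e => ?_, fun e => ?_⟩
  · have h2 := h 2
    rw [← e] at h2
    have := rowU hF (h 1) h2
    simp only [cv1, cv2] at this
    omega
  · have h2 := h 3
    rw [← e] at h2
    have := rowU hF (h 1) h2
    simp only [cv1, cv3] at this
    omega
  · have h2 := h 3
    rw [← e] at h2
    have := rowU hF (h 2) h2
    simp only [cv2, cv3] at this
    omega

/-- two blocks (shaped occurrences) overlap in at most one (endpoint) column. -/
lemma overlap {D F c c' v v'} (hF : IsFilling D F) (h : C5 F c v) (hs : Shp v)
    (h' : C5 F c' v') (hs' : Shp v') (hlt : c < c') (hle : c' ≤ c + 3) : False := by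
  obtain ⟨s1, s2, s3, s4⟩ := hs
  obtain ⟨t1, t2, t3, t4⟩ := hs'
  have hc : c' = c + 1 ∨ c' = c + 2 ∨ c' = c + 3 := by omega
  rcases hc with e | e | e
  · have a1 : v' 0 = v 1 := colU hF
      (mem5 h' 0 (c+1) (by simp only [cv0]; omega)) (mem5 h 1 (c+1) (by simp only [cv1]))
    have a2 : v' 3 = v 4 := colU hF
      (mem5 h' 3 (c+4) (by simp only [cv3]; omega)) (mem5 h 4 (c+4) (by simp only [cv4]))
    omega
  · have a1 : v' 0 = v 2 := colU hF
      (mem5 h' 0 (c+2) (by simp only [cv0]; omega)) (mem5 h 2 (c+2) (by simp only [cv2]))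
    have a2 : v' 2 = v 4 := colU hF
      (mem5 h' 2 (c+4) (by simp only [cv2]; omega)) (mem5 h 4 (c+4) (by simp only [cv4]))
    omega
  · have a1 : v' 0 = v 3 := colU hF
      (mem5 h' 0 (c+3) (by simp only [cv0]; omega)) (mem5 h 3 (c+3) (by simp only [cv3]))
    have a2 : v' 1 = v 4 := colU hF
      (mem5 h' 1 (c+4) (by simp only [cv1]; omega)) (mem5 h 4 (c+4) (by simp only [cv4]))
    omega

/-! ### The rewriting map -/

open Classical in
/-- rearrange the block values of `v` realizing `σ` (resp. `τ`) into the other pattern. -/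
noncomputable def oth (σ τ v : Fin 5 → ℕ) : Fin 5 → ℕ :=
  if Occ σ v then newv τ v else newv σ v

def Wit (D : YoungShape) (σ τ : Fin 5 → ℕ) (F : Set (ℕ × ℕ)) (c : ℕ) (v : Fin 5 → ℕ) : Prop :=
  C5 F c v ∧ Rct D c v ∧ (Occ σ v ∨ Occ τ v)

def STb (D : YoungShape) (σ τ : Fin 5 → ℕ) (F : Set (ℕ × ℕ)) (c : ℕ) : Prop :=
  ∃ v, Wit D σ τ F c v

def MidOf (D : YoungShape) (σ τ : Fin 5 → ℕ) (F : Set (ℕ × ℕ)) (x c : ℕ) : Prop :=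
  STb D σ τ F c ∧ c + 1 ≤ x ∧ x ≤ c + 3

/-- the toggling map on fillings: every `σ`- or `τ`-block gets its middle three cells
rearranged into the other pattern; all other cells are left alone. -/
noncomputable def Phi (D : YoungShape) (σ τ : Fin 5 → ℕ) (F : Set (ℕ × ℕ)) : Set (ℕ × ℕ) :=
  {q | (q ∈ F ∧ ∀ c, STb D σ τ F c → ¬(c + 1 ≤ q.1 ∧ q.1 ≤ c + 3))
    ∨ ∃ c v, Wit D σ τ F c v ∧
        ∃ i : Fin 5, 1 ≤ (i : ℕ) ∧ (i : ℕ) ≤ 3 ∧ q = (c + (i : ℕ), oth σ τ v i)}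

/-- mutual exclusivity of the two patterns (holds for distinct patterns). -/
def Hex (σ τ : Fin 5 → ℕ) : Prop := ∀ v : Fin 5 → ℕ, Dm v → ¬(Occ σ v ∧ Occ τ v)

section main
variable {D : YoungShape} {σ τ : Fin 5 → ℕ} {F : Set (ℕ × ℕ)}

lemma wit_shp (hσ : Good σ) (hτ : Good τ) {c v} (hw : Wit D σ τ F c v) : Shp v := by
  rcases hw.2.2 with h | h
  exacts [shp_of_occ hσ h, shp_of_occ hτ h]

lemma wit_symm {c v} (hw : Wit D σ τ F c v) : Wit D τ σ F c v :=
  ⟨hw.1, hw.2.1, hw.2.2.symm⟩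

lemma hex_symm (hex : Hex σ τ) : Hex τ σ := fun v hd h => hex v hd ⟨h.2, h.1⟩

/-- basic facts about `oth` on a block value tuple. -/
lemma oth_spec (hσ : Good σ) (hτ : Good τ) (hex : Hex σ τ) {v : Fin 5 → ℕ}
    (hd : Dm v) (ho : Occ σ v ∨ Occ τ v) :
    (Occ σ v → oth σ τ v = newv τ v ∧ Occ τ (oth σ τ v)) ∧
    (Occ τ v → oth σ τ v = newv σ v ∧ Occ σ (oth σ τ v)) ∧
    (Occ σ (oth σ τ v) ∨ Occ τ (oth σ τ v)) ∧
    oth σ τ v 0 = v 0 ∧ oth σ τ v 4 = v 4 ∧ Dm (oth σ τ v) ∧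
    (∀ i : Fin 5, 1 ≤ (i : ℕ) → (i : ℕ) ≤ 3 →
      oth σ τ v i = v 1 ∨ oth σ τ v i = v 2 ∨ oth σ τ v i = v 3) ∧
    (∀ j : Fin 5, 1 ≤ (j : ℕ) → (j : ℕ) ≤ 3 →
      oth σ τ v 1 = v j ∨ oth σ τ v 2 = v j ∨ oth σ τ v 3 = v j) := by
  have hshp : Shp v := by
    rcases ho with h | h
    exacts [shp_of_occ hσ h, shp_of_occ hτ h]
  by_cases hs : Occ σ v
  · have e : oth σ τ v = newv τ v := if_pos hs
    have hot : Occ τ (oth σ τ v) := by rw [e]; exact occ_newv hτ hshp hd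
    refine ⟨fun _ => ⟨e, hot⟩, fun ht => absurd ⟨hs, ht⟩ (hex v hd), Or.inr hot, ?_, ?_, ?_, ?_, ?_⟩
    · rw [e]; exact newv_zero hτ
    · rw [e]; exact newv_four hτ
    · rw [e]; exact newv_dm hτ hd
    · intro i a b; rw [e]; exact newv_val3 hτ hd i a b
    · intro j a b; rw [e]; exact newv_hits hτ hd j a b
  · have ht : Occ τ v := ho.resolve_left hs
    have e : oth σ τ v = newv σ v := if_neg hs
    have hot : Occ σ (oth σ τ v) := by rw [e]; exact occ_newv hσ hshp hd
    refine ⟨fun hs' => absurd hs' hs, fun _ => ⟨e, hot⟩, Or.inl hot, ?_, ?_, ?_, ?_, ?_⟩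
    · rw [e]; exact newv_zero hσ
    · rw [e]; exact newv_four hσ
    · rw [e]; exact newv_dm hσ hd
    · intro i a b; rw [e]; exact newv_val3 hσ hd i a b
    · intro j a b; rw [e]; exact newv_hits hσ hd j a b

lemma oth_symm (hex : Hex σ τ) {v : Fin 5 → ℕ} (hd : Dm v) (ho : Occ σ v ∨ Occ τ v) :
    oth σ τ v = oth τ σ v := by
  by_cases hs : Occ σ v
  · have ht : ¬ Occ τ v := fun ht => hex v hd ⟨hs, ht⟩
    rw [oth, oth, if_pos hs, if_neg ht]
  · have ht : Occ τ v := ho.resolve_left hs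
    rw [oth, oth, if_neg hs, if_pos ht]

lemma phi_symm (hF : IsFilling D F) (hex : Hex σ τ) : Phi D σ τ F = Phi D τ σ F := by
  have hwit : ∀ c v, Wit D σ τ F c v ↔ Wit D τ σ F c v := fun c v => ⟨wit_symm, wit_symm⟩
  have hstb : ∀ c, STb D σ τ F c ↔ STb D τ σ F c := fun c =>
    exists_congr fun v => hwit c v
  ext q
  constructor
  · rintro (⟨hq, hg⟩ | ⟨c, v, hw, i, a, b, e⟩)
    · exact Or.inl ⟨hq, fun c hc => hg c ((hstb c).2 hc)⟩
    · refine Or.inr ⟨c, v, (hwit c v).1 hw, i, a, b, ?_⟩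
      rw [e, oth_symm hex (c5_dm hF hw.1) hw.2.2]
  · rintro (⟨hq, hg⟩ | ⟨c, v, hw, i, a, b, e⟩)
    · exact Or.inl ⟨hq, fun c hc => hg c ((hstb c).1 hc)⟩
    · refine Or.inr ⟨c, v, (hwit c v).2 hw, i, a, b, ?_⟩
      rw [e, oth_symm hex (c5_dm hF hw.1) (wit_symm hw).2.2]

/-- endpoint cells of a block survive into `Phi`. -/
lemma mid_not_endpoint (hF : IsFilling D F) (hσ : Good σ) (hτ : Good τ) {c c₂ : ℕ} {v}
    (hw : Wit D σ τ F c v) (hst : STb D σ τ F c₂) :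
    ¬(c₂ + 1 ≤ c ∧ c ≤ c₂ + 3) ∧ ¬(c₂ + 1 ≤ c + 4 ∧ c + 4 ≤ c₂ + 3) := by
  obtain ⟨v₂, hw₂⟩ := hst
  have hs := wit_shp hσ hτ hw
  have hs₂ := wit_shp hσ hτ hw₂
  constructor
  · rintro ⟨a, b⟩
    exact overlap hF hw₂.1 hs₂ hw.1 hs (by omega) (by omega)
  · rintro ⟨a, b⟩
    exact overlap hF hw.1 hs hw₂.1 hs₂ (by omega) (by omega)

lemma wit_phi (hF : IsFilling D F) (hσ : Good σ) (hτ : Good τ) (hex : Hex σ τ) {c v}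
    (hw : Wit D σ τ F c v) : Wit D σ τ (Phi D σ τ F) c (oth σ τ v) := by
  have hd := c5_dm hF hw.1
  have hsp := oth_spec hσ hτ hex hd hw.2.2
  obtain ⟨-, -, hocc', e0, e4, -, hval, -⟩ := hsp
  have hC : C5 (Phi D σ τ F) c (oth σ τ v) := by
    intro i
    rcases fin5_cases i with h | h | h | h | h <;> subst h
    · rw [e0]
      refine Or.inl ⟨mem5 hw.1 0 _ rfl, fun c₂ hst hcon => ?_⟩
      have hcon' : c₂ + 1 ≤ c ∧ c ≤ c₂ + 3 := by simpa using hcon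
      exact (mid_not_endpoint hF hσ hτ hw hst).1 hcon'
    · exact Or.inr ⟨c, v, hw, 1, by simp, by simp, rfl⟩
    · exact Or.inr ⟨c, v, hw, 2, by simp, by simp, rfl⟩
    · exact Or.inr ⟨c, v, hw, 3, by simp, by simp, rfl⟩
    · rw [e4]
      refine Or.inl ⟨mem5 hw.1 4 _ rfl, fun c₂ hst hcon => ?_⟩
      have hcon' : c₂ + 1 ≤ c + 4 ∧ c + 4 ≤ c₂ + 3 := by simpa using hcon
      exact (mid_not_endpoint hF hσ hτ hw hst).2 hcon'
  refine ⟨hC, ?_, hocc'⟩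
  intro i j
  rcases fin5_cases j with h | h | h | h | h <;> subst h
  · rw [e0]; exact hw.2.1 i 0
  · rcases hval 1 (by simp) (by simp) with e | e | e <;> rw [e]
    exacts [hw.2.1 i 1, hw.2.1 i 2, hw.2.1 i 3]
  · rcases hval 2 (by simp) (by simp) with e | e | e <;> rw [e]
    exacts [hw.2.1 i 1, hw.2.1 i 2, hw.2.1 i 3]
  · rcases hval 3 (by simp) (by simp) with e | e | e <;> rw [e]
    exacts [hw.2.1 i 1, hw.2.1 i 2, hw.2.1 i 3]
  · rw [e4]; exact hw.2.1 i 4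

end main

section main2
variable {D : YoungShape} {σ τ : Fin 5 → ℕ} {F : Set (ℕ × ℕ)}

lemma mid_inj {u : Fin 5 → ℕ} (hdm : Dm u) {i i' : Fin 5}
    (a : 1 ≤ (i : ℕ)) (b : (i : ℕ) ≤ 3) (a' : 1 ≤ (i' : ℕ)) (b' : (i' : ℕ) ≤ 3)
    (h : u i = u i') : i = i' := by
  rcases fin5_cases i with h1 | h1 | h1 | h1 | h1 <;> subst h1 <;>
    rcases fin5_cases i' with h2 | h2 | h2 | h2 | h2 <;> subst h2 <;>
    simp only [cv0, cv1, cv2, cv3, cv4] at a b a' b' <;>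
    first
      | rfl
      | omega
      | exact absurd h hdm.1
      | exact absurd h hdm.2.1
      | exact absurd h hdm.2.2
      | exact absurd h.symm hdm.1
      | exact absurd h.symm hdm.2.1
      | exact absurd h.symm hdm.2.2

lemma oth_val_mid (hσ : Good σ) (hτ : Good τ) (hex : Hex σ τ) {v : Fin 5 → ℕ}
    (hd : Dm v) (ho : Occ σ v ∨ Occ τ v) (i : Fin 5) (a : 1 ≤ (i : ℕ)) (b : (i : ℕ) ≤ 3) :
    ∃ j : Fin 5, 1 ≤ (j : ℕ) ∧ (j : ℕ) ≤ 3 ∧ oth σ τ v i = v j := by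
  rcases (oth_spec hσ hτ hex hd ho).2.2.2.2.2.2.1 i a b with h | h | h
  · exact ⟨1, by simp, by simp, h⟩
  · exact ⟨2, by simp, by simp, h⟩
  · exact ⟨3, by simp, by simp, h⟩

lemma oth_hits_mid (hσ : Good σ) (hτ : Good τ) (hex : Hex σ τ) {v : Fin 5 → ℕ}
    (hd : Dm v) (ho : Occ σ v ∨ Occ τ v) (j : Fin 5) (a : 1 ≤ (j : ℕ)) (b : (j : ℕ) ≤ 3) :
    ∃ i : Fin 5, 1 ≤ (i : ℕ) ∧ (i : ℕ) ≤ 3 ∧ oth σ τ v i = v j := by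
  rcases (oth_spec hσ hτ hex hd ho).2.2.2.2.2.2.2 j a b with h | h | h
  · exact ⟨1, by simp, by simp, h⟩
  · exact ⟨2, by simp, by simp, h⟩
  · exact ⟨3, by simp, by simp, h⟩

lemma near_eq (hF : IsFilling D F) (hσ : Good σ) (hτ : Good τ) {c c' v v'}
    (hw : Wit D σ τ F c v) (hw' : Wit D σ τ F c' v')
    (h1 : c ≤ c' + 3) (h2 : c' ≤ c + 3) : c = c' := by
  rcases Nat.lt_trichotomy c c' with h | h | h
  · exact absurd (overlap hF hw.1 (wit_shp hσ hτ hw) hw'.1 (wit_shp hσ hτ hw') h h2) id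
  · exact h
  · exact absurd (overlap hF hw'.1 (wit_shp hσ hτ hw') hw.1 (wit_shp hσ hτ hw) h h1) id

lemma phi_filling (hF : IsFilling D F) (hσ : Good σ) (hτ : Good τ) (hex : Hex σ τ) :
    IsFilling D (Phi D σ τ F) := by
  refine ⟨?_, ?_, ?_⟩
  · rintro q (⟨hq, -⟩ | ⟨c, v, hw, i, a, b, e⟩)
    · exact hF.1 hq
    · subst e
      obtain ⟨j, -, -, hv⟩ := oth_val_mid hσ hτ hex (c5_dm hF hw.1) hw.2.2 i a b
      rw [hv]
      exact hw.2.1 i j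
  · rintro ⟨x, y⟩ (⟨hq, hg⟩ | ⟨c, v, hw, i, a, b, e⟩) ⟨x', y'⟩
      (⟨hq', hg'⟩ | ⟨c', v', hw', i', a', b', e'⟩) h <;> simp only at h
    · exact hF.2.1 _ hq _ hq' h
    · exfalso
      rcases Prod.ext_iff.1 e' with ⟨e1, -⟩
      simp only at e1
      exact hg c' ⟨v', hw'⟩ ⟨by omega, by omega⟩
    · exfalso
      rcases Prod.ext_iff.1 e with ⟨e1, -⟩
      simp only at e1
      exact hg' c ⟨v, hw⟩ ⟨by omega, by omega⟩
    · rcases Prod.ext_iff.1 e with ⟨e1, e2⟩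
      rcases Prod.ext_iff.1 e' with ⟨e1', e2'⟩
      simp only at e1 e2 e1' e2'
      have hcc : c = c' := near_eq hF hσ hτ hw hw' (by omega) (by omega)
      subst hcc
      have hvv : v = v' := c5_unique hF hw.1 hw'.1
      subst hvv
      have hii : i = i' := by
        have : (i : ℕ) = (i' : ℕ) := by omega
        exact Fin.ext this
      subst hii
      rw [e2, e2', e1, e1']
  · rintro ⟨x, y⟩ (⟨hq, hg⟩ | ⟨c, v, hw, i, a, b, e⟩) ⟨x', y'⟩
      (⟨hq', hg'⟩ | ⟨c', v', hw', i', a', b', e'⟩) h <;> simp only at h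
    · exact hF.2.2 _ hq _ hq' h
    · exfalso
      rcases Prod.ext_iff.1 e' with ⟨e1, e2⟩
      simp only at e1 e2
      obtain ⟨j, ja, jb, hv⟩ := oth_val_mid hσ hτ hex (c5_dm hF hw'.1) hw'.2.2 i' a' b'
      have hcell : (c' + (j : ℕ), y) ∈ F := by
        rw [h, e2, hv]; exact hw'.1 j
      have hx := rowU hF hq hcell
      exact hg c' ⟨v', hw'⟩ ⟨by omega, by omega⟩
    · exfalso
      rcases Prod.ext_iff.1 e with ⟨e1, e2⟩
      simp only at e1 e2
      obtain ⟨j, ja, jb, hv⟩ := oth_val_mid hσ hτ hex (c5_dm hF hw.1) hw.2.2 i a b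
      have hcell : (c + (j : ℕ), y') ∈ F := by
        rw [← h, e2, hv]; exact hw.1 j
      have hx := rowU hF hq' hcell
      exact hg' c ⟨v, hw⟩ ⟨by omega, by omega⟩
    · rcases Prod.ext_iff.1 e with ⟨e1, e2⟩
      rcases Prod.ext_iff.1 e' with ⟨e1', e2'⟩
      simp only at e1 e2 e1' e2'
      obtain ⟨j, ja, jb, hv⟩ := oth_val_mid hσ hτ hex (c5_dm hF hw.1) hw.2.2 i a b
      obtain ⟨j', ja', jb', hv'⟩ := oth_val_mid hσ hτ hex (c5_dm hF hw'.1) hw'.2.2 i' a' b'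
      have hvj : v j = v' j' := by rw [← hv, ← hv', ← e2, ← e2', h]
      have hcell : (c' + (j' : ℕ), v j) ∈ F := by rw [hvj]; exact hw'.1 j'
      have hrow := rowU hF (hw.1 j) hcell
      have hcc : c = c' := near_eq hF hσ hτ hw hw' (by omega) (by omega)
      subst hcc
      have hvv : v = v' := c5_unique hF hw.1 hw'.1
      subst hvv
      have hii : i = i' := by
        refine mid_inj (oth_spec hσ hτ hex (c5_dm hF hw.1) hw.2.2).2.2.2.2.2.1 a b a' b' ?_
        rw [← e2, ← e2', h]
      subst hii
      rw [e1, e1', e2, e2']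
end main2
section main3
variable {D : YoungShape} {σ τ : Fin 5 → ℕ} {F : Set (ℕ × ℕ)}

lemma phi_col_occ (hF : IsFilling D F) (hσ : Good σ) (hτ : Good τ) (hex : Hex σ τ) (x : ℕ) :
    (∃ y, (x, y) ∈ Phi D σ τ F) ↔ ∃ y, (x, y) ∈ F := by
  constructor
  · rintro ⟨y, (⟨hq, -⟩ | ⟨c, v, hw, i, a, b, e⟩)⟩
    · exact ⟨y, hq⟩
    · have e1 : x = c + (i : ℕ) := (Prod.ext_iff.1 e).1
      exact ⟨v i, e1 ▸ hw.1 i⟩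
  · rintro ⟨y, hy⟩
    by_cases hm : ∃ c, MidOf D σ τ F x c
    · obtain ⟨c, ⟨v, hw⟩, r1, r3⟩ := hm
      refine ⟨oth σ τ v ⟨x - c, by omega⟩,
        Or.inr ⟨c, v, hw, ⟨x - c, by omega⟩, (by omega : 1 ≤ x - c), (by omega : x - c ≤ 3), ?_⟩⟩
      exact Prod.ext_iff.2 ⟨(by omega : x = c + (x - c)), rfl⟩
    · exact ⟨y, Or.inl ⟨hy, fun c hst hcon => hm ⟨c, hst, hcon.1, hcon.2⟩⟩⟩

lemma phi_row_occ (hF : IsFilling D F) (hσ : Good σ) (hτ : Good τ) (hex : Hex σ τ) (y : ℕ) :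
    (∃ x, (x, y) ∈ Phi D σ τ F) ↔ ∃ x, (x, y) ∈ F := by
  constructor
  · rintro ⟨x, (⟨hq, -⟩ | ⟨c, v, hw, i, a, b, e⟩)⟩
    · exact ⟨x, hq⟩
    · have e2 : y = oth σ τ v i := (Prod.ext_iff.1 e).2
      obtain ⟨j, -, -, hv⟩ := oth_val_mid hσ hτ hex (c5_dm hF hw.1) hw.2.2 i a b
      exact ⟨c + (j : ℕ), by rw [e2, hv]; exact hw.1 j⟩
  · rintro ⟨x, hx⟩
    by_cases hm : ∃ c, MidOf D σ τ F x c
    · obtain ⟨c, ⟨v, hw⟩, r1, r3⟩ := hm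
      have hxc : (x, v ⟨x - c, by omega⟩) ∈ F :=
        mem5 hw.1 ⟨x - c, by omega⟩ x (by omega : c + (x - c) = x)
      have hyv : y = v ⟨x - c, by omega⟩ := colU hF hx hxc
      obtain ⟨i', a', b', hv'⟩ := oth_hits_mid hσ hτ hex (c5_dm hF hw.1) hw.2.2
        ⟨x - c, by omega⟩ (by omega : 1 ≤ x - c) (by omega : x - c ≤ 3)
      refine ⟨c + (i' : ℕ), Or.inr ⟨c, v, hw, i', a', b', ?_⟩⟩
      exact Prod.ext_iff.2 ⟨rfl, by rw [hyv, ← hv']⟩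
    · exact ⟨x, Or.inl ⟨hx, fun c hst hcon => hm ⟨c, hst, hcon.1, hcon.2⟩⟩⟩

lemma occ_conv (S : Set (ℕ × ℕ)) (r : ℕ) :
    (∀ p ∈ S, p.2 ≠ r) ↔ ¬ ∃ x, (x, r) ∈ S := by
  constructor
  · rintro h ⟨x, hx⟩
    exact h _ hx rfl
  · intro h p hp hpr
    exact h ⟨p.1, by rw [← hpr]; exact hp⟩

lemma occ_conv' (S : Set (ℕ × ℕ)) (r : ℕ) :
    (∀ p ∈ S, p.1 ≠ r) ↔ ¬ ∃ y, (r, y) ∈ S := by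
  constructor
  · rintro h ⟨y, hy⟩
    exact h _ hy rfl
  · intro h p hp hpr
    exact h ⟨p.2, by rw [← hpr]; exact hp⟩

lemma phi_emptyRows (hF : IsFilling D F) (hσ : Good σ) (hτ : Good τ) (hex : Hex σ τ) :
    emptyRows D (Phi D σ τ F) = emptyRows D F := by
  ext r
  unfold emptyRows
  simp only [Set.mem_setOf_eq]
  constructor
  · rintro ⟨hD, h⟩
    refine ⟨hD, (occ_conv F r).2 fun he => ?_⟩
    exact ((occ_conv _ r).1 h) ((phi_row_occ hF hσ hτ hex r).2 he)
  · rintro ⟨hD, h⟩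
    refine ⟨hD, (occ_conv _ r).2 fun he => ?_⟩
    exact ((occ_conv F r).1 h) ((phi_row_occ hF hσ hτ hex r).1 he)

lemma phi_emptyCols (hF : IsFilling D F) (hσ : Good σ) (hτ : Good τ) (hex : Hex σ τ) :
    emptyCols D (Phi D σ τ F) = emptyCols D F := by
  ext r
  unfold emptyCols
  simp only [Set.mem_setOf_eq]
  constructor
  · rintro ⟨hD, h⟩
    refine ⟨hD, (occ_conv' F r).2 fun he => ?_⟩
    exact ((occ_conv' _ r).1 h) ((phi_col_occ hF hσ hτ hex r).2 he)
  · rintro ⟨hD, h⟩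
    refine ⟨hD, (occ_conv' _ r).2 fun he => ?_⟩
    exact ((occ_conv' F r).1 h) ((phi_col_occ hF hσ hτ hex r).1 he)

lemma contains_iff {σ : Fin 5 → ℕ} :
    FillingContains D F σ (Set.Icc 1 4) ↔ ∃ c v, C5 F c v ∧ Rct D c v ∧ Occ σ v := by
  constructor
  · rintro ⟨idx, v, hmono, hmem, hord, hrect, hadj⟩
    have a1 : idx 1 = idx 0 + 1 := hadj 0 (by norm_num) (by norm_num)
    have a2 : idx 2 = idx 1 + 1 := hadj 1 (by norm_num) (by norm_num)
    have a3 : idx 3 = idx 2 + 1 := hadj 2 (by norm_num) (by norm_num)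
    have a4 : idx 4 = idx 3 + 1 := hadj 3 (by norm_num) (by norm_num)
    have e : ∀ i : Fin 5, idx i = idx 0 + (i : ℕ) := by
      intro i
      rcases fin5_cases i with h | h | h | h | h <;> subst h <;>
        simp only [cv0, cv1, cv2, cv3, cv4] <;> omega
    refine ⟨idx 0, v, fun i => ?_, fun i j => ?_, hord⟩
    · rw [← e i]; exact hmem i
    · rw [← e i]; exact hrect i j
  · rintro ⟨c, v, hC, hR, hO⟩
    refine ⟨fun i => c + (i : ℕ), v, ?_, hC, hO, hR, ?_⟩
    · intro p q h
      exact Nat.add_lt_add_left h c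
    · intro j hj h
      exact (by omega : c + (j + 1) = c + j + 1)

lemma phi_wit_rev (hF : IsFilling D F) (hσ : Good σ) (hτ : Good τ) (hex : Hex σ τ) {c u}
    (hw' : Wit D σ τ (Phi D σ τ F) c u) : ∃ v, Wit D σ τ F c v ∧ u = oth σ τ v := by
  by_cases hm : ∃ i : Fin 5, ∃ c₀, MidOf D σ τ F (c + (i : ℕ)) c₀
  · obtain ⟨i, c₀, ⟨v₀, hw₀⟩, r1, r3⟩ := hm
    have hwphi := wit_phi hF hσ hτ hex hw₀
    have hPF := phi_filling hF hσ hτ hex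
    have hcc : c = c₀ := by
      have hi := i.isLt
      exact near_eq hPF hσ hτ hw' hwphi (by omega) (by omega)
    subst hcc
    exact ⟨v₀, hw₀, c5_unique hPF hw'.1 hwphi.1⟩
  · exfalso
    push_neg at hm
    have hCF : C5 F c u := by
      intro i
      rcases hw'.1 i with (⟨hq, -⟩ | ⟨c', v', hwv, i', a, b, e⟩)
      · exact hq
      · exfalso
        have e1 : c + (i : ℕ) = c' + (i' : ℕ) := (Prod.ext_iff.1 e).1
        exact hm i c' ⟨⟨v', hwv⟩, by omega, by omega⟩
    refine hm 1 c ⟨⟨u, hCF, hw'.2.1, hw'.2.2⟩, by simp, by simp⟩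

lemma phi_contains (hF : IsFilling D F) (hσ : Good σ) (hτ : Good τ) (hex : Hex σ τ) :
    (∃ c u, C5 (Phi D σ τ F) c u ∧ Rct D c u ∧ Occ τ u) ↔
    (∃ c v, C5 F c v ∧ Rct D c v ∧ Occ σ v) := by
  constructor
  · rintro ⟨c, u, hC, hR, hO⟩
    obtain ⟨v, hw, he⟩ := phi_wit_rev hF hσ hτ hex ⟨hC, hR, Or.inr hO⟩
    rcases hw.2.2 with hs | ht
    · exact ⟨c, v, hw.1, hw.2.1, hs⟩
    · exfalso
      have hd := c5_dm hF hw.1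
      have hsp := oth_spec hσ hτ hex hd hw.2.2
      have hOσ : Occ σ u := by rw [he]; exact (hsp.2.1 ht).2
      have hdu : Dm u := by rw [he]; exact hsp.2.2.2.2.2.1
      exact hex u hdu ⟨hOσ, hO⟩
  · rintro ⟨c, v, hC, hR, hO⟩
    have hw : Wit D σ τ F c v := ⟨hC, hR, Or.inl hO⟩
    have hsp := oth_spec hσ hτ hex (c5_dm hF hC) hw.2.2
    have hwp := wit_phi hF hσ hτ hex hw
    exact ⟨c, oth σ τ v, hwp.1, hwp.2.1, (hsp.1 hO).2⟩

lemma oth_oth (hσ : Good σ) (hτ : Good τ) (hex : Hex σ τ) {v : Fin 5 → ℕ}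
    (hd : Dm v) (ho : Occ σ v ∨ Occ τ v) : oth σ τ (oth σ τ v) = v := by
  have hsp := oth_spec hσ hτ hex hd ho
  have hdm' : Dm (oth σ τ v) := hsp.2.2.2.2.2.1
  have ho' : Occ σ (oth σ τ v) ∨ Occ τ (oth σ τ v) := hsp.2.2.1
  have hsp' := oth_spec hσ hτ hex hdm' ho'
  have hval := hsp.2.2.2.2.2.2.1
  have u1 := hval 1 (by simp) (by simp)
  have u2 := hval 2 (by simp) (by simp)
  have u3 := hval 3 (by simp) (by simp)
  have t1 := hsp'.2.2.2.2.2.2.1 1 (by simp) (by simp)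
  have t2 := hsp'.2.2.2.2.2.2.1 2 (by simp) (by simp)
  have t3 := hsp'.2.2.2.2.2.2.1 3 (by simp) (by simp)
  have e0 : oth σ τ (oth σ τ v) 0 = v 0 := by rw [hsp'.2.2.2.1, hsp.2.2.2.1]
  have e4 : oth σ τ (oth σ τ v) 4 = v 4 := by rw [hsp'.2.2.2.2.1, hsp.2.2.2.2.1]
  have m1' : oth σ τ (oth σ τ v) 1 = v 1 ∨ oth σ τ (oth σ τ v) 1 = v 2 ∨
      oth σ τ (oth σ τ v) 1 = v 3 := by
    rcases t1 with h | h | h <;> rw [h] <;> [exact u1; exact u2; exact u3]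
  have m2' : oth σ τ (oth σ τ v) 2 = v 1 ∨ oth σ τ (oth σ τ v) 2 = v 2 ∨
      oth σ τ (oth σ τ v) 2 = v 3 := by
    rcases t2 with h | h | h <;> rw [h] <;> [exact u1; exact u2; exact u3]
  have m3' : oth σ τ (oth σ τ v) 3 = v 1 ∨ oth σ τ (oth σ τ v) 3 = v 2 ∨
      oth σ τ (oth σ τ v) 3 = v 3 := by
    rcases t3 with h | h | h <;> rw [h] <;> [exact u1; exact u2; exact u3]
  by_cases hs : Occ σ v
  · have hoτ : Occ τ (oth σ τ v) := (hsp.1 hs).2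
    have hooσ : Occ σ (oth σ τ (oth σ τ v)) := (hsp'.2.1 hoτ).2
    exact occ_unique hσ hooσ hs e0 e4 m1' m2' m3'
  · have ht : Occ τ v := ho.resolve_left hs
    have hoσ : Occ σ (oth σ τ v) := (hsp.2.1 ht).2
    have hooτ : Occ τ (oth σ τ (oth σ τ v)) := (hsp'.1 hoσ).2
    exact occ_unique hτ hooτ ht e0 e4 m1' m2' m3'

lemma phi_phi (hF : IsFilling D F) (hσ : Good σ) (hτ : Good τ) (hex : Hex σ τ) :
    Phi D σ τ (Phi D σ τ F) = F := by
  have hPF := phi_filling hF hσ hτ hex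
  have hstb : ∀ c, STb D σ τ (Phi D σ τ F) c → STb D σ τ F c := by
    rintro c ⟨u, hw⟩
    obtain ⟨v, hwF, -⟩ := phi_wit_rev hF hσ hτ hex hw
    exact ⟨v, hwF⟩
  ext q
  constructor
  · rintro (⟨hqG, hg⟩ | ⟨c, u, hwG, i, a, b, e⟩)
    · rcases hqG with (⟨hq, -⟩ | ⟨c, v, hw, i, a, b, e⟩)
      · exact hq
      · exfalso
        have hstG : STb D σ τ (Phi D σ τ F) c := ⟨_, wit_phi hF hσ hτ hex hw⟩
        have e1 : q.1 = c + (i : ℕ) := (Prod.ext_iff.1 e).1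
        exact hg c hstG ⟨by omega, by omega⟩
    · obtain ⟨v, hwF, he⟩ := phi_wit_rev hF hσ hτ hex hwG
      have hoo : oth σ τ (oth σ τ v) = v :=
        oth_oth hσ hτ hex (c5_dm hF hwF.1) hwF.2.2
      rw [e, he, hoo]
      exact hwF.1 i
  · intro hq
    by_cases hm : ∃ c, MidOf D σ τ F q.1 c
    · obtain ⟨c, ⟨v, hw⟩, r1, r3⟩ := hm
      have hq' : (q.1, q.2) ∈ F := hq
      have hq2 : q.2 = v ⟨q.1 - c, by omega⟩ :=
        colU hF hq' (mem5 hw.1 ⟨q.1 - c, by omega⟩ q.1 (by omega : c + (q.1 - c) = q.1))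
      have hwp := wit_phi hF hσ hτ hex hw
      refine Or.inr ⟨c, oth σ τ v, hwp, ⟨q.1 - c, by omega⟩, (by omega : 1 ≤ q.1 - c),
        (by omega : q.1 - c ≤ 3), ?_⟩
      rw [oth_oth hσ hτ hex (c5_dm hF hw.1) hw.2.2]
      exact Prod.ext_iff.2 ⟨(by omega : q.1 = c + (q.1 - c)), hq2⟩
    · have hqG : q ∈ Phi D σ τ F :=
        Or.inl ⟨hq, fun c hst hcon => hm ⟨c, hst, hcon.1, hcon.2⟩⟩
      exact Or.inl ⟨hqG, fun c hst hcon => hm ⟨c, hstb c hst, hcon.1, hcon.2⟩⟩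

end main3
lemma fs_main {σ τ : Fin 5 → ℕ} (hσ : Good σ) (hτ : Good τ) (hex : Hex σ τ) :
    FSWilfEquiv σ (Set.Icc 1 4) τ (Set.Icc 1 4) := by
  intro D R C
  set A := {F : Set (ℕ × ℕ) | IsFilling D F ∧ ¬ FillingContains D F σ (Set.Icc 1 4) ∧
      emptyRows D F = R ∧ emptyCols D F = C} with hA
  set B := {F : Set (ℕ × ℕ) | IsFilling D F ∧ ¬ FillingContains D F τ (Set.Icc 1 4) ∧
      emptyRows D F = R ∧ emptyCols D F = C} with hB
  have mapsσ : ∀ F ∈ A, Phi D σ τ F ∈ B := by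
    rintro F ⟨hF, hav, hr, hc⟩
    refine ⟨phi_filling hF hσ hτ hex, ?_, ?_, ?_⟩
    · intro hcon
      exact hav (contains_iff.2 ((phi_contains hF hσ hτ hex).1 (contains_iff.1 hcon)))
    · rw [phi_emptyRows hF hσ hτ hex, hr]
    · rw [phi_emptyCols hF hσ hτ hex, hc]
  have mapsτ : ∀ G ∈ B, Phi D σ τ G ∈ A := by
    rintro G ⟨hG, hav, hr, hc⟩
    have hsym : Phi D σ τ G = Phi D τ σ G := phi_symm hG hex
    rw [hsym]
    refine ⟨phi_filling hG hτ hσ (hex_symm hex), ?_, ?_, ?_⟩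
    · intro hcon
      exact hav (contains_iff.2
        ((phi_contains hG hτ hσ (hex_symm hex)).1 (contains_iff.1 hcon)))
    · rw [phi_emptyRows hG hτ hσ (hex_symm hex), hr]
    · rw [phi_emptyCols hG hτ hσ (hex_symm hex), hc]
  have hinv : ∀ F, IsFilling D F → Phi D σ τ (Phi D σ τ F) = F := by
    intro F hF
    exact phi_phi hF hσ hτ hex
  have himg : Phi D σ τ '' A = B := by
    apply Set.Subset.antisymm
    · rintro _ ⟨F, hFA, rfl⟩
      exact mapsσ F hFA
    · intro G hGB
      exact ⟨Phi D σ τ G, mapsτ G hGB, hinv G hGB.1⟩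
  have hinj : Set.InjOn (Phi D σ τ) A := by
    intro F hFa G hGa h
    rw [← hinv F hFa.1, h, hinv G hGa.1]
  calc A.ncard = (Phi D σ τ '' A).ncard := (Set.ncard_image_of_injOn hinj).symm
    _ = B.ncard := by rw [himg]
end FSP

/-- The chain `13452 ≡_fs 13542 ≡_fs 14352 ≡_fs 14532 ≡_fs 15342 ≡_fs 15432`
of filling-shape-Wilf-equivalent consecutive patterns of length 5. -/
theorem stmt2 :
    FS5 ![1,3,4,5,2] ![1,3,5,4,2] ∧
    FS5 ![1,3,5,4,2] ![1,4,3,5,2] ∧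
    FS5 ![1,4,3,5,2] ![1,4,5,3,2] ∧
    FS5 ![1,4,5,3,2] ![1,5,3,4,2] ∧
    FS5 ![1,5,3,4,2] ![1,5,4,3,2] := by
  refine ⟨?_, ?_, ?_, ?_, ?_⟩
  · refine FSP.fs_main (by unfold FSP.Good; decide) (by unfold FSP.Good; decide) ?_
    rintro v - ⟨h1, h2⟩
    have a := h1 2 3
    have b := h2 2 3
    rw [show (![1,3,4,5,2] : Fin 5 → ℕ) 2 = 4 from rfl,
        show (![1,3,4,5,2] : Fin 5 → ℕ) 3 = 5 from rfl] at a
    rw [show (![1,3,5,4,2] : Fin 5 → ℕ) 2 = 5 from rfl,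
        show (![1,3,5,4,2] : Fin 5 → ℕ) 3 = 4 from rfl] at b
    omega
  · refine FSP.fs_main (by unfold FSP.Good; decide) (by unfold FSP.Good; decide) ?_
    rintro v - ⟨h1, h2⟩
    have a := h1 1 2
    have b := h2 1 2
    rw [show (![1,3,5,4,2] : Fin 5 → ℕ) 1 = 3 from rfl,
        show (![1,3,5,4,2] : Fin 5 → ℕ) 2 = 5 from rfl] at a
    rw [show (![1,4,3,5,2] : Fin 5 → ℕ) 1 = 4 from rfl,
        show (![1,4,3,5,2] : Fin 5 → ℕ) 2 = 3 from rfl] at b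
    omega
  · refine FSP.fs_main (by unfold FSP.Good; decide) (by unfold FSP.Good; decide) ?_
    rintro v - ⟨h1, h2⟩
    have a := h1 2 3
    have b := h2 2 3
    rw [show (![1,4,3,5,2] : Fin 5 → ℕ) 2 = 3 from rfl,
        show (![1,4,3,5,2] : Fin 5 → ℕ) 3 = 5 from rfl] at a
    rw [show (![1,4,5,3,2] : Fin 5 → ℕ) 2 = 5 from rfl,
        show (![1,4,5,3,2] : Fin 5 → ℕ) 3 = 3 from rfl] at b
    omega
  · refine FSP.fs_main (by unfold FSP.Good; decide) (by unfold FSP.Good; decide) ?_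
    rintro v - ⟨h1, h2⟩
    have a := h1 1 2
    have b := h2 1 2
    rw [show (![1,4,5,3,2] : Fin 5 → ℕ) 1 = 4 from rfl,
        show (![1,4,5,3,2] : Fin 5 → ℕ) 2 = 5 from rfl] at a
    rw [show (![1,5,3,4,2] : Fin 5 → ℕ) 1 = 5 from rfl,
        show (![1,5,3,4,2] : Fin 5 → ℕ) 2 = 3 from rfl] at b
    omega
  · refine FSP.fs_main (by unfold FSP.Good; decide) (by unfold FSP.Good; decide) ?_
    rintro v - ⟨h1, h2⟩
    have a := h1 2 3
    have b := h2 2 3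
    rw [show (![1,5,3,4,2] : Fin 5 → ℕ) 2 = 3 from rfl,
        show (![1,5,3,4,2] : Fin 5 → ℕ) 3 = 4 from rfl] at a
    rw [show (![1,5,4,3,2] : Fin 5 → ℕ) 2 = 4 from rfl,
        show (![1,5,4,3,2] : Fin 5 → ℕ) 3 = 3 from rfl] at b
    omega
end

section
/- The following filling-shape-Wilf-equivalences hold among consecutive patterns of length 5: 12453 ≡_fs 12543 and 24153 ≡_fs 25143. -/
namespace FSAux

def Iso5 (v w : Fin 5 → ℕ) : Prop := ∀ s t : Fin 5, v s < v t ↔ w s < w t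

/-- Occurrence of the consecutive pattern `σ` at (0-based) columns `c, …, c+4`. -/
def Occ (D : YoungShape) (F : Set (ℕ × ℕ)) (σ : Fin 5 → ℕ) (c : ℕ) (v : Fin 5 → ℕ) : Prop :=
  (∀ s : Fin 5, ((c + (s : ℕ), v s) ∈ F)) ∧
  (∀ s t : Fin 5, ((c + (s : ℕ), v t) ∈ D.cells)) ∧ Iso5 v σ

/-- A "window": an occurrence of `σ` or of `τ` at columns `c, …, c+4`. -/
def WOcc (D : YoungShape) (σ τ : Fin 5 → ℕ) (F : Set (ℕ × ℕ)) (c : ℕ) (v : Fin 5 → ℕ) : Prop :=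
  (∀ s : Fin 5, ((c + (s : ℕ), v s) ∈ F)) ∧
  (∀ s t : Fin 5, ((c + (s : ℕ), v t) ∈ D.cells)) ∧ (Iso5 v σ ∨ Iso5 v τ)

def Wn (D : YoungShape) (σ τ : Fin 5 → ℕ) (F : Set (ℕ × ℕ)) (c : ℕ) : Prop :=
  ∃ v, WOcc D σ τ F c v

def SwapCol (D : YoungShape) (σ τ : Fin 5 → ℕ) (a b : Fin 5) (F : Set (ℕ × ℕ)) (x : ℕ) : Prop :=
  ∃ c, Wn D σ τ F c ∧ (x = c + (a : ℕ) ∨ x = c + (b : ℕ))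

def Phi (D : YoungShape) (σ τ : Fin 5 → ℕ) (a b : Fin 5) (F : Set (ℕ × ℕ)) : Set (ℕ × ℕ) :=
  {p | (p ∈ F ∧ ¬ SwapCol D σ τ a b F p.1) ∨
       (∃ c, Wn D σ τ F c ∧ p.1 = c + (a : ℕ) ∧ (c + (b : ℕ), p.2) ∈ F) ∨
       (∃ c, Wn D σ τ F c ∧ p.1 = c + (b : ℕ) ∧ (c + (a : ℕ), p.2) ∈ F)}

def swapFn (a b : Fin 5) (v : Fin 5 → ℕ) : Fin 5 → ℕ :=
  fun s => if s = a then v b else if s = b then v a else v s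

structure Good (σ τ : Fin 5 → ℕ) (a b : Fin 5) : Prop where
  ha : 1 ≤ (a : ℕ)
  hb : (b : ℕ) ≤ 3
  hab : (a : ℕ) < (b : ℕ)
  hdiff : ∀ v : Fin 5 → ℕ, Iso5 v σ → Iso5 v τ → False
  htog : ∀ v : Fin 5 → ℕ, Iso5 v σ → Iso5 (swapFn a b v) τ
  htog' : ∀ v : Fin 5 → ℕ, Iso5 v τ → Iso5 (swapFn a b v) σ
  hover : ∀ d : ℕ, 0 < d → d < 4 → ∀ v w : Fin 5 → ℕ,
    (∀ s t : Fin 5, (s : ℕ) = d + (t : ℕ) → v s = w t) →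
    (Iso5 v σ ∨ Iso5 v τ) → (Iso5 w σ ∨ Iso5 w τ) → False

lemma Good.symm {σ τ : Fin 5 → ℕ} {a b : Fin 5} (hg : Good σ τ a b) : Good τ σ a b where
  ha := hg.ha
  hb := hg.hb
  hab := hg.hab
  hdiff := fun v h1 h2 => hg.hdiff v h2 h1
  htog := hg.htog'
  htog' := hg.htog
  hover := fun d h1 h2 v w hc hv hw => hg.hover d h1 h2 v w hc hv.symm hw.symm

section Main

variable {D : YoungShape} {σ τ : Fin 5 → ℕ} {a b : Fin 5} {F : Set (ℕ × ℕ)}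

lemma wocc_symm {c v} (h : WOcc D σ τ F c v) : WOcc D τ σ F c v :=
  ⟨h.1, h.2.1, h.2.2.symm⟩

lemma wn_symm_eq : Wn D σ τ = Wn D τ σ := by
  funext F c
  exact propext ⟨fun ⟨v, h⟩ => ⟨v, wocc_symm h⟩, fun ⟨v, h⟩ => ⟨v, wocc_symm h⟩⟩

lemma swapcol_symm_eq : SwapCol D σ τ a b = SwapCol D τ σ a b := by
  unfold SwapCol; rw [wn_symm_eq]

lemma phi_symm_eq : Phi D σ τ a b = Phi D τ σ a b := by
  unfold Phi; rw [wn_symm_eq, swapcol_symm_eq]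

lemma colu (hF : IsFilling D F) {x y y' : ℕ} (h1 : (x, y) ∈ F) (h2 : (x, y') ∈ F) : y = y' := by
  have := hF.2.1 _ h1 _ h2 rfl
  exact congrArg Prod.snd this

lemma rowu (hF : IsFilling D F) {x x' y : ℕ} (h1 : (x, y) ∈ F) (h2 : (x', y) ∈ F) : x = x' := by
  have := hF.2.2 _ h1 _ h2 rfl
  exact congrArg Prod.fst this

lemma spacing (hg : Good σ τ a b) (hF : IsFilling D F) {c c' : ℕ}
    (h1 : Wn D σ τ F c) (h2 : Wn D σ τ F c') (hlt : c < c') (hcl : c' < c + 4) : False := by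
  obtain ⟨v, hv⟩ := h1
  obtain ⟨w, hw⟩ := h2
  refine hg.hover (c' - c) (by omega) (by omega) v w ?_ hv.2.2 hw.2.2
  intro s t hst
  have hcol : c + (s : ℕ) = c' + (t : ℕ) := by omega
  have hw' : (c + (s : ℕ), w t) ∈ F := by rw [hcol]; exact hw.1 t
  exact colu hF (hv.1 s) hw'

lemma wn_close (hg : Good σ τ a b) (hF : IsFilling D F) {c c' : ℕ}
    (h1 : Wn D σ τ F c) (h2 : Wn D σ τ F c') (hc1 : c < c' + 4) (hc2 : c' < c + 4) : c = c' := by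
  rcases lt_trichotomy c c' with h | h | h
  · exact absurd (spacing hg hF h1 h2 h hc2) not_false
  · exact h
  · exact absurd (spacing hg hF h2 h1 h hc1) not_false

lemma phi_mem {x y : ℕ} :
    (x, y) ∈ Phi D σ τ a b F ↔
      (((x, y) ∈ F ∧ ¬ SwapCol D σ τ a b F x) ∨
       (∃ c, Wn D σ τ F c ∧ x = c + (a : ℕ) ∧ (c + (b : ℕ), y) ∈ F) ∨
       (∃ c, Wn D σ τ F c ∧ x = c + (b : ℕ) ∧ (c + (a : ℕ), y) ∈ F)) := Iff.rfl

/-- Every cell of `Phi F` has the row of some cell of `F`, at a related column. -/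
lemma phi_row (hg : Good σ τ a b) (hF : IsFilling D F) {x y : ℕ}
    (h : (x, y) ∈ Phi D σ τ a b F) :
    ∃ x', (x', y) ∈ F ∧ (x' = x ∨ ∃ c, Wn D σ τ F c ∧
      ((x = c + (a : ℕ) ∧ x' = c + (b : ℕ)) ∨ (x = c + (b : ℕ) ∧ x' = c + (a : ℕ)))) := by
  rcases h with ⟨h1, _⟩ | ⟨c, hw, hx, hm⟩ | ⟨c, hw, hx, hm⟩
  · exact ⟨x, h1, Or.inl rfl⟩
  · exact ⟨c + (b : ℕ), hm, Or.inr ⟨c, hw, Or.inl ⟨hx, rfl⟩⟩⟩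
  · exact ⟨c + (a : ℕ), hm, Or.inr ⟨c, hw, Or.inr ⟨hx, rfl⟩⟩⟩

lemma phi_subset (hg : Good σ τ a b) (hF : IsFilling D F) :
    Phi D σ τ a b F ⊆ D.cells := by
  rintro ⟨x, y⟩ h
  rcases h with ⟨h1, _⟩ | ⟨c, ⟨v, hv⟩, hx, hm⟩ | ⟨c, ⟨v, hv⟩, hx, hm⟩
  · exact hF.1 h1
  · have hx' : x = c + (a : ℕ) := hx
    have hy' : y = v b := colu hF hm (hv.1 b)
    subst hx'; rw [hy']; exact hv.2.1 a b
  · have hx' : x = c + (b : ℕ) := hx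
    have hy' : y = v a := colu hF hm (hv.1 a)
    subst hx'; rw [hy']; exact hv.2.1 b a

lemma phi_colu (hg : Good σ τ a b) (hF : IsFilling D F) {x y y' : ℕ}
    (h1 : (x, y) ∈ Phi D σ τ a b F) (h2 : (x, y') ∈ Phi D σ τ a b F) : y = y' := by
  have hab := hg.hab
  have ha := hg.ha
  have hb := hg.hb
  rcases h1 with ⟨hm1, hs1⟩ | ⟨c, hw, hx, hm1⟩ | ⟨c, hw, hx, hm1⟩ <;>
    rcases h2 with ⟨hm2, hs2⟩ | ⟨c', hw', hx', hm2⟩ | ⟨c', hw', hx', hm2⟩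
  · exact colu hF hm1 hm2
  · exact absurd ⟨c', hw', Or.inl hx'⟩ hs1
  · exact absurd ⟨c', hw', Or.inr hx'⟩ hs1
  · exact absurd ⟨c, hw, Or.inl hx⟩ hs2
  · have : c = c' := by omega
    subst this; exact colu hF hm1 hm2
  · have : c = c' := wn_close hg hF hw hw' (by omega) (by omega)
    omega
  · exact absurd ⟨c, hw, Or.inr hx⟩ hs2
  · have : c = c' := wn_close hg hF hw hw' (by omega) (by omega)
    omega
  · have : c = c' := by omega
    subst this; exact colu hF hm1 hm2

lemma phi_rowu (hg : Good σ τ a b) (hF : IsFilling D F) {x x' y : ℕ}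
    (h1 : (x, y) ∈ Phi D σ τ a b F) (h2 : (x', y) ∈ Phi D σ τ a b F) : x = x' := by
  have hab := hg.hab
  have ha := hg.ha
  have hb := hg.hb
  rcases h1 with ⟨hm1, hs1⟩ | ⟨c, hw, hx, hm1⟩ | ⟨c, hw, hx, hm1⟩ <;>
    rcases h2 with ⟨hm2, hs2⟩ | ⟨c', hw', hx', hm2⟩ | ⟨c', hw', hx', hm2⟩
  · exact rowu hF hm1 hm2
  · have := rowu hF hm1 hm2
    exact absurd ⟨c', hw', Or.inr this⟩ hs1
  · have := rowu hF hm1 hm2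
    exact absurd ⟨c', hw', Or.inl this⟩ hs1
  · have := rowu hF hm1 hm2
    exact absurd ⟨c, hw, Or.inr this.symm⟩ hs2
  · have heq : c + (b : ℕ) = c' + (b : ℕ) := rowu hF hm1 hm2
    omega
  · have heq : c + (b : ℕ) = c' + (a : ℕ) := rowu hF hm1 hm2
    have : c = c' := wn_close hg hF hw hw' (by omega) (by omega)
    omega
  · have := rowu hF hm1 hm2
    exact absurd ⟨c, hw, Or.inl this.symm⟩ hs2
  · have heq : c + (a : ℕ) = c' + (b : ℕ) := rowu hF hm1 hm2
    have : c = c' := wn_close hg hF hw hw' (by omega) (by omega)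
    omega
  · have heq : c + (a : ℕ) = c' + (a : ℕ) := rowu hF hm1 hm2
    omega

lemma phi_isFilling (hg : Good σ τ a b) (hF : IsFilling D F) :
    IsFilling D (Phi D σ τ a b F) := by
  refine ⟨phi_subset hg hF, ?_, ?_⟩
  · rintro ⟨x, y⟩ h1 ⟨x', y'⟩ h2 (heq : x = x')
    subst heq
    have := phi_colu hg hF h1 h2
    simp [this]
  · rintro ⟨x, y⟩ h1 ⟨x', y'⟩ h2 (heq : y = y')
    subst heq
    have := phi_rowu hg hF h1 h2
    simp [this]

lemma phi_rows (hg : Good σ τ a b) (hF : IsFilling D F) (y : ℕ) :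
    (∃ x, (x, y) ∈ Phi D σ τ a b F) ↔ (∃ x, (x, y) ∈ F) := by
  constructor
  · rintro ⟨x, hx⟩
    obtain ⟨x', hx', _⟩ := phi_row hg hF hx
    exact ⟨x', hx'⟩
  · rintro ⟨x, hx⟩
    by_cases hs : SwapCol D σ τ a b F x
    · obtain ⟨c, hw, hor⟩ := hs
      rcases hor with h | h
      · exact ⟨c + (b : ℕ), Or.inr (Or.inr ⟨c, hw, rfl, h ▸ hx⟩)⟩
      · exact ⟨c + (a : ℕ), Or.inr (Or.inl ⟨c, hw, rfl, h ▸ hx⟩)⟩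
    · exact ⟨x, Or.inl ⟨hx, hs⟩⟩

lemma phi_cols (hg : Good σ τ a b) (hF : IsFilling D F) (x : ℕ) :
    (∃ y, (x, y) ∈ Phi D σ τ a b F) ↔ (∃ y, (x, y) ∈ F) := by
  constructor
  · rintro ⟨y, hy⟩
    rcases hy with ⟨h1, _⟩ | ⟨c, ⟨v, hv⟩, hx, _⟩ | ⟨c, ⟨v, hv⟩, hx, _⟩
    · exact ⟨y, h1⟩
    · have hx' : x = c + (a : ℕ) := hx
      exact ⟨v a, hx' ▸ hv.1 a⟩
    · have hx' : x = c + (b : ℕ) := hx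
      exact ⟨v b, hx' ▸ hv.1 b⟩
  · rintro ⟨y, hy⟩
    by_cases hs : SwapCol D σ τ a b F x
    · obtain ⟨c, hw, hor⟩ := hs
      obtain ⟨v, hv⟩ := hw
      rcases hor with h | h
      · exact ⟨v b, Or.inr (Or.inl ⟨c, ⟨v, hv⟩, h, hv.1 b⟩)⟩
      · exact ⟨v a, Or.inr (Or.inr ⟨c, ⟨v, hv⟩, h, hv.1 a⟩)⟩
    · exact ⟨y, Or.inl ⟨hy, hs⟩⟩

lemma phi_emptyRows (hg : Good σ τ a b) (hF : IsFilling D F) :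
    emptyRows D (Phi D σ τ a b F) = emptyRows D F := by
  ext r
  unfold emptyRows
  simp only [Set.mem_setOf_eq]
  constructor
  · rintro ⟨hD, h⟩
    refine ⟨hD, fun c hc hcr => ?_⟩
    have : ∃ x, (x, r) ∈ Phi D σ τ a b F := by
      refine (phi_rows hg hF r).2 ⟨c.1, ?_⟩
      rw [show (c.1, r) = c from by rw [← hcr]]
      exact hc
    obtain ⟨x, hx⟩ := this
    exact h _ hx rfl
  · rintro ⟨hD, h⟩
    refine ⟨hD, fun c hc hcr => ?_⟩
    have : ∃ x, (x, r) ∈ F := by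
      refine (phi_rows hg hF r).1 ⟨c.1, ?_⟩
      rw [show (c.1, r) = c from by rw [← hcr]]
      exact hc
    obtain ⟨x, hx⟩ := this
    exact h _ hx rfl

lemma phi_emptyCols (hg : Good σ τ a b) (hF : IsFilling D F) :
    emptyCols D (Phi D σ τ a b F) = emptyCols D F := by
  ext r
  unfold emptyCols
  simp only [Set.mem_setOf_eq]
  constructor
  · rintro ⟨hD, h⟩
    refine ⟨hD, fun c hc hcr => ?_⟩
    have : ∃ y, (r, y) ∈ Phi D σ τ a b F := by
      refine (phi_cols hg hF r).2 ⟨c.2, ?_⟩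
      rw [show (r, c.2) = c from by rw [← hcr]]
      exact hc
    obtain ⟨y, hy⟩ := this
    exact h _ hy rfl
  · rintro ⟨hD, h⟩
    refine ⟨hD, fun c hc hcr => ?_⟩
    have : ∃ y, (r, y) ∈ F := by
      refine (phi_cols hg hF r).1 ⟨c.2, ?_⟩
      rw [show (r, c.2) = c from by rw [← hcr]]
      exact hc
    obtain ⟨y, hy⟩ := this
    exact h _ hy rfl

lemma wocc_phi (hg : Good σ τ a b) (hF : IsFilling D F) {c : ℕ} {v : Fin 5 → ℕ}
    (hv : WOcc D σ τ F c v) : WOcc D σ τ (Phi D σ τ a b F) c (swapFn a b v) := by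
  have ha := hg.ha
  have hb := hg.hb
  have hab := hg.hab
  have hne : a ≠ b := fun h => by rw [h] at hab; omega
  refine ⟨?_, ?_, ?_⟩
  · intro s
    by_cases hsa : s = a
    · have hval : swapFn a b v s = v b := by rw [hsa]; simp [swapFn, hne]
      rw [hval, hsa]
      exact Or.inr (Or.inl ⟨c, ⟨v, hv⟩, rfl, hv.1 b⟩)
    · by_cases hsb : s = b
      · have hval : swapFn a b v s = v a := by
          rw [hsb]; simp [swapFn, Ne.symm hne]
        rw [hval, hsb]
        exact Or.inr (Or.inr ⟨c, ⟨v, hv⟩, rfl, hv.1 a⟩)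
      · have hval : swapFn a b v s = v s := by simp [swapFn, hsa, hsb]
        rw [hval]
        refine Or.inl ⟨hv.1 s, ?_⟩
        rintro ⟨c', hw', hor⟩
        have hs5 : (s : ℕ) < 5 := s.isLt
        rcases hor with h | h
        · have hcc : c = c' := wn_close hg hF ⟨v, hv⟩ hw' (by omega) (by omega)
          exact hsa (Fin.ext (by omega))
        · have hcc : c = c' := wn_close hg hF ⟨v, hv⟩ hw' (by omega) (by omega)
          exact hsb (Fin.ext (by omega))
  · intro s t
    by_cases hta : t = a
    · have hval : swapFn a b v t = v b := by rw [hta]; simp [swapFn, hne]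
      rw [hval]; exact hv.2.1 s b
    · by_cases htb : t = b
      · have hval : swapFn a b v t = v a := by
          rw [htb]; simp [swapFn, Ne.symm hne]
        rw [hval]; exact hv.2.1 s a
      · have hval : swapFn a b v t = v t := by simp [swapFn, hta, htb]
        rw [hval]; exact hv.2.1 s t
  · rcases hv.2.2 with h | h
    · exact Or.inr (hg.htog v h)
    · exact Or.inl (hg.htog' v h)

lemma wn_phi (hg : Good σ τ a b) (hF : IsFilling D F) {c : ℕ}
    (h : Wn D σ τ F c) : Wn D σ τ (Phi D σ τ a b F) c := by
  obtain ⟨v, hv⟩ := h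
  exact ⟨swapFn a b v, wocc_phi hg hF hv⟩

lemma wn_phi_rev (hg : Good σ τ a b) (hF : IsFilling D F) {e : ℕ}
    (h : Wn D σ τ (Phi D σ τ a b F) e) : Wn D σ τ F e := by
  obtain ⟨u, hu⟩ := h
  by_cases hB : Wn D σ τ F e
  · exact hB
  exfalso
  have ha := hg.ha
  have hb := hg.hb
  have hab := hg.hab
  by_cases hA : ∃ c, Wn D σ τ F c ∧ c ≠ e ∧ c < e + 4 ∧ e < c + 4
  · obtain ⟨c, hw, hne, hb1, hb2⟩ := hA
    have hwp : Wn D σ τ (Phi D σ τ a b F) c := wn_phi hg hF hw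
    have hFp : IsFilling D (Phi D σ τ a b F) := phi_isFilling hg hF
    rcases Nat.lt_or_ge c e with hlt | hge
    · exact spacing hg hFp hwp ⟨u, hu⟩ hlt hb2
    · have : e < c := lt_of_le_of_ne hge (Ne.symm hne)
      exact spacing hg hFp ⟨u, hu⟩ hwp this hb1
  · apply hB
    refine ⟨u, fun s => ?_, hu.2.1, hu.2.2⟩
    have hm := hu.1 s
    have hs5 : (s : ℕ) < 5 := s.isLt
    rcases hm with ⟨h1, _⟩ | ⟨c, hw, hx, _⟩ | ⟨c, hw, hx, _⟩
    · exact h1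
    · have hx' : (e + (s : ℕ)) = c + (a : ℕ) := hx
      have hne : c ≠ e := fun h => hB (h ▸ hw)
      exact absurd ⟨c, hw, hne, by omega, by omega⟩ hA
    · have hx' : (e + (s : ℕ)) = c + (b : ℕ) := hx
      have hne : c ≠ e := fun h => hB (h ▸ hw)
      exact absurd ⟨c, hw, hne, by omega, by omega⟩ hA

lemma phi_avoid (hg : Good σ τ a b) (hF : IsFilling D F)
    (hav : ∀ c v, ¬ Occ D F σ c v) :
    ∀ e u, ¬ Occ D (Phi D σ τ a b F) τ e u := by
  intro e u hocc
  have hwF : Wn D σ τ F e :=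
    wn_phi_rev hg hF ⟨u, hocc.1, hocc.2.1, Or.inr hocc.2.2⟩
  obtain ⟨v, hv⟩ := hwF
  have hvτ : Iso5 v τ := by
    rcases hv.2.2 with h | h
    · exact absurd ⟨hv.1, hv.2.1, h⟩ (hav e v)
    · exact h
  have hv' := wocc_phi hg hF hv
  have hFp : IsFilling D (Phi D σ τ a b F) := phi_isFilling hg hF
  have hu_eq : ∀ s, u s = swapFn a b v s := fun s => colu hFp (hocc.1 s) (hv'.1 s)
  have hσ : Iso5 (swapFn a b v) σ := hg.htog' v hvτ
  have huσ : Iso5 u σ := by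
    intro s t; rw [hu_eq s, hu_eq t]; exact hσ s t
  exact hg.hdiff u huσ hocc.2.2

lemma swapcol_phi_iff (hg : Good σ τ a b) (hF : IsFilling D F) {x : ℕ} :
    SwapCol D σ τ a b (Phi D σ τ a b F) x ↔ SwapCol D σ τ a b F x := by
  constructor
  · rintro ⟨c, hw, hor⟩; exact ⟨c, wn_phi_rev hg hF hw, hor⟩
  · rintro ⟨c, hw, hor⟩; exact ⟨c, wn_phi hg hF hw, hor⟩

lemma phi_phi (hg : Good σ τ a b) (hF : IsFilling D F) :
    Phi D σ τ a b (Phi D σ τ a b F) = F := by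
  have ha := hg.ha
  have hb := hg.hb
  have hab := hg.hab
  ext ⟨x, y⟩
  constructor
  · intro h
    rcases h with ⟨h1, hs⟩ | ⟨c, hwp, hx, hm⟩ | ⟨c, hwp, hx, hm⟩
    · rcases h1 with ⟨h1, _⟩ | ⟨c, hw, hx, _⟩ | ⟨c, hw, hx, _⟩
      · exact h1
      · exact absurd ⟨c, wn_phi hg hF hw, Or.inl hx⟩ hs
      · exact absurd ⟨c, wn_phi hg hF hw, Or.inr hx⟩ hs
    · have hw : Wn D σ τ F c := wn_phi_rev hg hF hwp
      have hx' : x = c + (a : ℕ) := hx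
      rcases hm with ⟨hm1, hs1⟩ | ⟨c', hw', hx1, hm'⟩ | ⟨c', hw', hx1, hm'⟩
      · exact absurd ⟨c, hw, Or.inr rfl⟩ hs1
      · have heq : c + (b : ℕ) = c' + (a : ℕ) := hx1
        have : c = c' := wn_close hg hF hw hw' (by omega) (by omega)
        omega
      · have heq : c + (b : ℕ) = c' + (b : ℕ) := hx1
        have hcc : c = c' := by omega
        subst hcc
        exact hx' ▸ hm'
    · have hw : Wn D σ τ F c := wn_phi_rev hg hF hwp
      have hx' : x = c + (b : ℕ) := hx
      rcases hm with ⟨hm1, hs1⟩ | ⟨c', hw', hx1, hm'⟩ | ⟨c', hw', hx1, hm'⟩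
      · exact absurd ⟨c, hw, Or.inl rfl⟩ hs1
      · have heq : c + (a : ℕ) = c' + (a : ℕ) := hx1
        have hcc : c = c' := by omega
        subst hcc
        exact hx' ▸ hm'
      · have heq : c + (a : ℕ) = c' + (b : ℕ) := hx1
        have : c = c' := wn_close hg hF hw hw' (by omega) (by omega)
        omega
  · intro hxy
    by_cases hs : SwapCol D σ τ a b F x
    · obtain ⟨c, hw, hor⟩ := hs
      have hwp := wn_phi hg hF hw
      rcases hor with h | h
      · exact Or.inr (Or.inl ⟨c, hwp, h, Or.inr (Or.inr ⟨c, hw, rfl, h ▸ hxy⟩)⟩)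
      · exact Or.inr (Or.inr ⟨c, hwp, h, Or.inr (Or.inl ⟨c, hw, rfl, h ▸ hxy⟩)⟩)
    · exact Or.inl ⟨Or.inl ⟨hxy, hs⟩, fun hsp => hs ((swapcol_phi_iff hg hF).mp hsp)⟩

lemma fc_iff (D : YoungShape) (F : Set (ℕ × ℕ)) (σ : Fin 5 → ℕ) :
    FillingContains D F σ (Set.Icc 1 4) ↔ ∃ c v, Occ D F σ c v := by
  constructor
  · rintro ⟨idx, v, hmono, hmem, hiso, hrect, hadj⟩
    have h1 : idx 1 = idx 0 + 1 := hadj 0 (by simp [Set.mem_Icc]) (by omega)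
    have h2 : idx 2 = idx 1 + 1 := hadj 1 (by simp [Set.mem_Icc]) (by omega)
    have h3 : idx 3 = idx 2 + 1 := hadj 2 (by simp [Set.mem_Icc]) (by omega)
    have h4 : idx 4 = idx 3 + 1 := hadj 3 (by simp [Set.mem_Icc]) (by omega)
    have key : ∀ s : Fin 5, idx s = idx 0 + (s : ℕ) := by
      intro s; fin_cases s <;> simp <;> omega
    refine ⟨idx 0, v, fun s => ?_, fun s t => ?_, hiso⟩
    · rw [← key s]; exact hmem s
    · rw [← key s]; exact hrect s t
  · rintro ⟨c, v, hmem, hrect, hiso⟩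
    refine ⟨fun s => c + (s : ℕ), v, ?_, hmem, hiso, hrect, ?_⟩
    · intro s t hst
      have h' : (s : ℕ) < (t : ℕ) := hst
      show c + (s : ℕ) < c + (t : ℕ)
      omega
    · intro j _ h
      show c + (j + 1) = c + j + 1
      omega

theorem good_fsw {σ τ : Fin 5 → ℕ} {a b : Fin 5} (hg : Good σ τ a b) :
    FSWilfEquiv σ (Set.Icc 1 4) τ (Set.Icc 1 4) := by
  intro D R C
  have himg : ∀ (σ' τ' : Fin 5 → ℕ), Good σ' τ' a b → ∀ F : Set (ℕ × ℕ),
      IsFilling D F → ¬ FillingContains D F σ' (Set.Icc 1 4) →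
      (IsFilling D (Phi D σ' τ' a b F) ∧
        ¬ FillingContains D (Phi D σ' τ' a b F) τ' (Set.Icc 1 4) ∧
        emptyRows D (Phi D σ' τ' a b F) = emptyRows D F ∧
        emptyCols D (Phi D σ' τ' a b F) = emptyCols D F) := by
    intro σ' τ' hg' F hF hav
    refine ⟨phi_isFilling hg' hF, ?_, phi_emptyRows hg' hF, phi_emptyCols hg' hF⟩
    rw [fc_iff] at hav ⊢
    rintro ⟨c, v, h⟩
    exact phi_avoid hg' hF (fun c' v' h' => hav ⟨c', v', h'⟩) c v h
  have hBA : {F : Set (ℕ × ℕ) | IsFilling D F ∧ ¬ FillingContains D F τ (Set.Icc 1 4) ∧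
      emptyRows D F = R ∧ emptyCols D F = C} =
      (Phi D σ τ a b) '' {F : Set (ℕ × ℕ) | IsFilling D F ∧
        ¬ FillingContains D F σ (Set.Icc 1 4) ∧
        emptyRows D F = R ∧ emptyCols D F = C} := by
    ext G
    constructor
    · rintro ⟨hGf, hGav, hGR, hGC⟩
      obtain ⟨x1, x2, x3, x4⟩ := himg τ σ hg.symm G hGf hGav
      have e : Phi D τ σ a b G = Phi D σ τ a b G :=
        congrFun (phi_symm_eq (D := D) (σ := τ) (τ := σ) (a := a) (b := b)) G
      rw [e] at x1 x2 x3 x4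
      refine ⟨Phi D σ τ a b G, ⟨x1, x2, x3.trans hGR, x4.trans hGC⟩, ?_⟩
      exact phi_phi hg hGf
    · rintro ⟨F, ⟨hFf, hFav, hFR, hFC⟩, rfl⟩
      obtain ⟨x1, x2, x3, x4⟩ := himg σ τ hg F hFf hFav
      exact ⟨x1, x2, x3.trans hFR, x4.trans hFC⟩
  have hinj : Set.InjOn (Phi D σ τ a b)
      {F : Set (ℕ × ℕ) | IsFilling D F ∧ ¬ FillingContains D F σ (Set.Icc 1 4) ∧
        emptyRows D F = R ∧ emptyCols D F = C} := by
    intro F1 h1 F2 h2 heq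
    rw [← phi_phi hg h1.1, heq, phi_phi hg h2.1]
  rw [hBA, Set.ncard_image_of_injOn hinj]

end Main

section Inst

lemma iso_1 (v : Fin 5 → ℕ) :
    Iso5 v ![1,2,4,5,3] ↔ (v 0 < v 1 ∧ v 1 < v 4 ∧ v 4 < v 2 ∧ v 2 < v 3) := by
  constructor
  · intro h
    exact ⟨(h 0 1).mpr (by decide), (h 1 4).mpr (by decide), (h 4 2).mpr (by decide),
      (h 2 3).mpr (by decide)⟩
  · rintro ⟨h1, h2, h3, h4⟩ s t
    fin_cases s <;> fin_cases t <;> simp <;> omega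

lemma iso_2 (v : Fin 5 → ℕ) :
    Iso5 v ![1,2,5,4,3] ↔ (v 0 < v 1 ∧ v 1 < v 4 ∧ v 4 < v 3 ∧ v 3 < v 2) := by
  constructor
  · intro h
    exact ⟨(h 0 1).mpr (by decide), (h 1 4).mpr (by decide), (h 4 3).mpr (by decide),
      (h 3 2).mpr (by decide)⟩
  · rintro ⟨h1, h2, h3, h4⟩ s t
    fin_cases s <;> fin_cases t <;> simp <;> omega

lemma iso_3 (v : Fin 5 → ℕ) :
    Iso5 v ![2,4,1,5,3] ↔ (v 2 < v 0 ∧ v 0 < v 4 ∧ v 4 < v 1 ∧ v 1 < v 3) := by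
  constructor
  · intro h
    exact ⟨(h 2 0).mpr (by decide), (h 0 4).mpr (by decide), (h 4 1).mpr (by decide),
      (h 1 3).mpr (by decide)⟩
  · rintro ⟨h1, h2, h3, h4⟩ s t
    fin_cases s <;> fin_cases t <;> simp <;> omega

lemma iso_4 (v : Fin 5 → ℕ) :
    Iso5 v ![2,5,1,4,3] ↔ (v 2 < v 0 ∧ v 0 < v 4 ∧ v 4 < v 3 ∧ v 3 < v 1) := by
  constructor
  · intro h
    exact ⟨(h 2 0).mpr (by decide), (h 0 4).mpr (by decide), (h 4 3).mpr (by decide),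
      (h 3 1).mpr (by decide)⟩
  · rintro ⟨h1, h2, h3, h4⟩ s t
    fin_cases s <;> fin_cases t <;> simp <;> omega

lemma good1 : Good ![1,2,4,5,3] ![1,2,5,4,3] 2 3 where
  ha := by decide
  hb := by decide
  hab := by decide
  hdiff := by
    intro v h1 h2
    rw [iso_1] at h1; rw [iso_2] at h2; omega
  htog := by
    intro v h
    rw [iso_1] at h
    rw [iso_2]
    simp +decide [swapFn]
    omega
  htog' := by
    intro v h
    rw [iso_2] at h
    rw [iso_1]
    simp +decide [swapFn]
    omega
  hover := by
    intro d hd1 hd2 v w hc hv hw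
    have hv' : v 0 < v 1 ∧ v 1 < v 4 ∧ v 4 < v 2 ∧ v 4 < v 3 := by
      rcases hv with h | h
      · rw [iso_1] at h; omega
      · rw [iso_2] at h; omega
    have hw' : w 0 < w 1 ∧ w 1 < w 4 ∧ w 4 < w 2 ∧ w 4 < w 3 := by
      rcases hw with h | h
      · rw [iso_1] at h; omega
      · rw [iso_2] at h; omega
    interval_cases d
    · have l1 : v 1 = w 0 := hc 1 0 (by decide)
      have l2 : v 2 = w 1 := hc 2 1 (by decide)
      have l3 : v 3 = w 2 := hc 3 2 (by decide)
      have l4 : v 4 = w 3 := hc 4 3 (by decide)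
      omega
    · have l2 : v 2 = w 0 := hc 2 0 (by decide)
      have l3 : v 3 = w 1 := hc 3 1 (by decide)
      have l4 : v 4 = w 2 := hc 4 2 (by decide)
      omega
    · have l3 : v 3 = w 0 := hc 3 0 (by decide)
      have l4 : v 4 = w 1 := hc 4 1 (by decide)
      omega

lemma good2 : Good ![2,4,1,5,3] ![2,5,1,4,3] 1 3 where
  ha := by decide
  hb := by decide
  hab := by decide
  hdiff := by
    intro v h1 h2
    rw [iso_3] at h1; rw [iso_4] at h2; omega
  htog := by
    intro v h
    rw [iso_3] at h
    rw [iso_4]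
    simp +decide [swapFn]
    omega
  htog' := by
    intro v h
    rw [iso_4] at h
    rw [iso_3]
    simp +decide [swapFn]
    omega
  hover := by
    intro d hd1 hd2 v w hc hv hw
    have hv' : v 2 < v 0 ∧ v 0 < v 4 ∧ v 4 < v 1 ∧ v 4 < v 3 := by
      rcases hv with h | h
      · rw [iso_3] at h; omega
      · rw [iso_4] at h; omega
    have hw' : w 2 < w 0 ∧ w 0 < w 4 ∧ w 4 < w 1 ∧ w 4 < w 3 := by
      rcases hw with h | h
      · rw [iso_3] at h; omega
      · rw [iso_4] at h; omega
    interval_cases d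
    · have l1 : v 1 = w 0 := hc 1 0 (by decide)
      have l2 : v 2 = w 1 := hc 2 1 (by decide)
      have l3 : v 3 = w 2 := hc 3 2 (by decide)
      have l4 : v 4 = w 3 := hc 4 3 (by decide)
      omega
    · have l2 : v 2 = w 0 := hc 2 0 (by decide)
      have l3 : v 3 = w 1 := hc 3 1 (by decide)
      have l4 : v 4 = w 2 := hc 4 2 (by decide)
      omega
    · have l3 : v 3 = w 0 := hc 3 0 (by decide)
      have l4 : v 4 = w 1 := hc 4 1 (by decide)
      omega

end Inst

end FSAux

/-- The filling-shape-Wilf-equivalences `12453 ≡_fs 12543` and `24153 ≡_fs 25143`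
of consecutive patterns of length 5. -/
theorem stmt3 :
    FS5 ![1,2,4,5,3] ![1,2,5,4,3] ∧ FS5 ![2,4,1,5,3] ![2,5,1,4,3] := by
  exact ⟨FSAux.good_fsw FSAux.good1, FSAux.good_fsw FSAux.good2⟩
end
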